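/- arXiv:1610.02216 — 10 statements merged into one kernel-verified Lean document; each statement's English description precedes it below -/
import Mathlib

section
/- Assume t1, t2, t3 are pairwise distinct complex numbers, γ3 is not a nonpositive integer, N ∈ ℤ_{≥0}, and {α, β} = {−N, γ1+γ2+γ3+N−1} (so α+β+1 = γ1+γ2+γ3). If q0 ∈ ℂ satisfies c_{N+1}(q0) = 0, then the polynomial y(x) = Σ_{m=0}^{N} c_m(q0)·(x−t3)^m is a nonzero polynomial of degree at most N which solves the Heun equation, i.e. the polynomial identity (x−t1)(x−t2)(x−t3)·y''(x) + [γ1(x−t2)(x−t3) + γ2(x−t1)(x−t3) + γ3(x−t1)(x−t2)]·y'(x) + (αβ(x−t3) − q0)·y(x) = 0 holds in ℂ[x]. -/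
open Polynomial

/-- The Heun differential operator as a map on polynomials. -/
noncomputable def heunOp (t1 t2 t3 γ1 γ2 γ3 α β q0 : ℂ) (y : ℂ[X]) : ℂ[X] :=
  (X - C t1) * (X - C t2) * (X - C t3) * derivative (derivative y)
    + (C γ1 * (X - C t2) * (X - C t3) + C γ2 * (X - C t1) * (X - C t3)
        + C γ3 * (X - C t1) * (X - C t2)) * derivative y
    + (C α * C β * (X - C t3) - C q0) * y

lemma heunOp_add (t1 t2 t3 γ1 γ2 γ3 α β q0 : ℂ) (p q : ℂ[X]) :
    heunOp t1 t2 t3 γ1 γ2 γ3 α β q0 (p + q)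
      = heunOp t1 t2 t3 γ1 γ2 γ3 α β q0 p + heunOp t1 t2 t3 γ1 γ2 γ3 α β q0 q := by
  simp only [heunOp, derivative_add]; ring

lemma heunOp_C_mul (t1 t2 t3 γ1 γ2 γ3 α β q0 r : ℂ) (p : ℂ[X]) :
    heunOp t1 t2 t3 γ1 γ2 γ3 α β q0 (C r * p) = C r * heunOp t1 t2 t3 γ1 γ2 γ3 α β q0 p := by
  simp only [heunOp, derivative_C_mul]; ring

lemma heunOp_one (t1 t2 t3 γ1 γ2 γ3 α β q0 : ℂ) :
    heunOp t1 t2 t3 γ1 γ2 γ3 α β q0 1 = C α * C β * (X - C t3) - C q0 := by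
  simp [heunOp]

lemma heunOp_monomial (t1 t2 t3 γ1 γ2 γ3 α β q0 : ℂ)
    (hsum : γ1 + γ2 + γ3 = α + β + 1) (k : ℕ) :
    heunOp t1 t2 t3 γ1 γ2 γ3 α β q0 ((X - C t3) ^ (k + 1))
      = C (((k : ℂ) + 1 + α) * ((k : ℂ) + 1 + β)) * (X - C t3) ^ (k + 2)
        - C (((k : ℂ) + 1) * (((k : ℂ) + γ3) * (t1 + t2 - 2 * t3)
              + (t2 - t3) * γ1 + (t1 - t3) * γ2) + q0) * (X - C t3) ^ (k + 1)
        + C ((t1 - t3) * (t2 - t3) * ((k : ℂ) + 1) * ((k : ℂ) + γ3)) * (X - C t3) ^ k := by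
  have hγ1 : γ1 = α + β + 1 - γ2 - γ3 := by linear_combination hsum
  subst hγ1
  have e1 : (X : ℂ[X]) - C t1 = (X - C t3) - C (t1 - t3) := by rw [map_sub]; ring
  have e2 : (X : ℂ[X]) - C t2 = (X - C t3) - C (t2 - t3) := by rw [map_sub]; ring
  have hd : ∀ m : ℕ, derivative ((X - C t3) ^ (m + 1)) = C ((m : ℂ) + 1) * (X - C t3) ^ m := by
    intro m
    rw [derivative_pow]
    simp [Nat.cast_add]
  cases k with
  | zero =>
    simp only [heunOp, zero_add, pow_one, hd 0, Nat.cast_zero]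
    simp only [derivative_C_mul, derivative_sub, derivative_X, derivative_C, sub_zero,
      derivative_one, mul_zero, zero_add]
    rw [e1, e2]
    simp only [map_mul, map_add, map_sub, map_one, map_ofNat]
    set u : ℂ[X] := X - C t3 with hu
    ring
  | succ n =>
    simp only [heunOp, hd (n + 1)]
    rw [derivative_C_mul, hd n]
    rw [e1, e2]
    push_cast
    simp only [map_mul, map_add, map_sub, map_one, map_ofNat]
    set u : ℂ[X] := X - C t3 with hu
    ring

/-- Key induction: the Heun operator applied to a truncation of the formal power-series
solution leaves only two boundary terms. -/
lemma heun_aux (t1 t2 t3 γ1 γ2 γ3 α β q0 : ℂ) (a : ℕ → ℂ)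
    (hsum : γ1 + γ2 + γ3 = α + β + 1)
    (h1 : (t1 - t3) * (t2 - t3) * γ3 * a 1 = q0 * a 0)
    (hr : ∀ m : ℕ, (t1 - t3) * (t2 - t3) * ((m : ℂ) + 2) * ((m : ℂ) + 1 + γ3) * a (m + 2)
        = -(((m : ℂ) + α) * ((m : ℂ) + β)) * a m
          + (((m : ℂ) + 1) * (((m : ℂ) + γ3) * (t1 + t2 - 2 * t3)
              + (t2 - t3) * γ1 + (t1 - t3) * γ2) + q0) * a (m + 1)) :
    ∀ K : ℕ,
      heunOp t1 t2 t3 γ1 γ2 γ3 α β q0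
          (∑ m ∈ Finset.range (K + 1), C (a m) * (X - C t3) ^ m)
        = C ((((K : ℂ) + α) * ((K : ℂ) + β)) * a K) * (X - C t3) ^ (K + 1)
          - C ((t1 - t3) * (t2 - t3) * ((K : ℂ) + 1) * ((K : ℂ) + γ3) * a (K + 1))
              * (X - C t3) ^ K := by
  intro K
  induction K with
  | zero =>
    rw [Finset.sum_range_one, pow_zero, mul_one, ← mul_one (C (a 0)), heunOp_C_mul, heunOp_one]
    have h1' := congrArg C h1
    simp only [map_mul, map_sub] at h1'
    simp only [Nat.cast_zero, map_mul, map_add, map_sub, map_one, map_ofNat, zero_add, pow_one,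
      pow_zero, mul_one]
    set u : ℂ[X] := X - C t3 with hu
    linear_combination h1'
  | succ K ih =>
    rw [Finset.sum_range_succ, heunOp_add, heunOp_C_mul, ih, heunOp_monomial _ _ _ _ _ _ _ _ _ hsum K]
    have h' := congrArg C (hr K)
    simp only [map_mul, map_add, map_sub, map_neg, map_one, map_ofNat] at h'
    push_cast
    simp only [map_mul, map_add, map_sub, map_neg, map_one, map_ofNat]
    set u : ℂ[X] := X - C t3 with hu
    linear_combination (u ^ (K + 1)) * h'

/-- Polynomial solutions of Heun's equation: if `c (N+1)` vanishes at `q0`,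
then `y(x) = ∑_{m=0}^{N} c_m(q0) (x - t3)^m` is a nonzero polynomial of degree at most `N`
solving the Heun equation
`(x−t1)(x−t2)(x−t3)·y'' + [γ1(x−t2)(x−t3)+γ2(x−t1)(x−t3)+γ3(x−t1)(x−t2)]·y'
  + (αβ(x−t3) − q0)·y = 0` as a polynomial identity in `ℂ[x]`. -/
theorem heun_polynomial_solution
    (t1 t2 t3 γ1 γ2 γ3 α β : ℂ)
    (ht12 : t1 ≠ t2) (ht13 : t1 ≠ t3) (ht23 : t2 ≠ t3)
    (hγ3 : ∀ n : ℕ, γ3 ≠ -(n : ℂ))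
    (N : ℕ)
    (hαβ : ({α, β} : Set ℂ) = ({-(N : ℂ), γ1 + γ2 + γ3 + (N : ℂ) - 1} : Set ℂ))
    (c : ℕ → Polynomial ℂ)
    (hc0 : c 0 = 1)
    (hc1 : Polynomial.C ((t1 - t3) * (t2 - t3) * γ3) * c 1 = Polynomial.X * c 0)
    (hrec : ∀ m : ℕ,
      Polynomial.C ((t1 - t3) * (t2 - t3) * ((m : ℂ) + 2) * ((m : ℂ) + 1 + γ3)) * c (m + 2)
        = Polynomial.C (-(((m : ℂ) + α) * ((m : ℂ) + β))) * c m
          + (Polynomial.C (((m : ℂ) + 1) * (((m : ℂ) + γ3) * (t1 + t2 - 2 * t3)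
                + (t2 - t3) * γ1 + (t1 - t3) * γ2)) + Polynomial.X) * c (m + 1))
    (q0 : ℂ) (hq0 : (c (N + 1)).eval q0 = 0)
    (y : Polynomial ℂ)
    (hy : y = ∑ m ∈ Finset.range (N + 1),
      Polynomial.C ((c m).eval q0) * (Polynomial.X - Polynomial.C t3) ^ m) :
    y ≠ 0 ∧ y.natDegree ≤ N ∧
      (Polynomial.X - Polynomial.C t1) * (Polynomial.X - Polynomial.C t2) *
          (Polynomial.X - Polynomial.C t3) * derivative (derivative y)
        + (Polynomial.C γ1 * (Polynomial.X - Polynomial.C t2) * (Polynomial.X - Polynomial.C t3)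
            + Polynomial.C γ2 * (Polynomial.X - Polynomial.C t1) * (Polynomial.X - Polynomial.C t3)
            + Polynomial.C γ3 * (Polynomial.X - Polynomial.C t1) * (Polynomial.X - Polynomial.C t2))
            * derivative y
        + (Polynomial.C α * Polynomial.C β * (Polynomial.X - Polynomial.C t3)
            - Polynomial.C q0) * y = 0 := by
  set a : ℕ → ℂ := fun m => (c m).eval q0 with ha
  have hs1 : t1 - t3 ≠ 0 := sub_ne_zero.mpr ht13
  have hs2 : t2 - t3 ≠ 0 := sub_ne_zero.mpr ht23
  -- consequences of hαβ
  have hcase := Set.pair_eq_pair_iff.mp hαβ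
  have hsum : γ1 + γ2 + γ3 = α + β + 1 := by
    rcases hcase with ⟨h1, h2⟩ | ⟨h1, h2⟩ <;> rw [h1, h2] <;> ring
  have hNz : ((N : ℂ) + α) * ((N : ℂ) + β) = 0 := by
    rcases hcase with ⟨h1, _⟩ | ⟨_, h2⟩
    · rw [h1]; ring
    · rw [h2]; ring
  -- scalar form of recursion
  have h1 : (t1 - t3) * (t2 - t3) * γ3 * a 1 = q0 * a 0 := by
    have := congrArg (eval q0) hc1
    simpa [ha] using this
  have hr : ∀ m : ℕ, (t1 - t3) * (t2 - t3) * ((m : ℂ) + 2) * ((m : ℂ) + 1 + γ3) * a (m + 2)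
      = -(((m : ℂ) + α) * ((m : ℂ) + β)) * a m
        + (((m : ℂ) + 1) * (((m : ℂ) + γ3) * (t1 + t2 - 2 * t3)
            + (t2 - t3) * γ1 + (t1 - t3) * γ2) + q0) * a (m + 1) := by
    intro m
    have := congrArg (eval q0) (hrec m)
    simpa [ha, add_mul] using this
  -- nonvanishing of the leading coefficient
  have hGne : ∀ m : ℕ, (t1 - t3) * (t2 - t3) * ((m : ℂ) + 2) * ((m : ℂ) + 1 + γ3) ≠ 0 := by
    intro m
    refine mul_ne_zero (mul_ne_zero (mul_ne_zero hs1 hs2) ?_) ?_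
    · have h2 : ((m : ℂ) + 2) = ((m + 2 : ℕ) : ℂ) := by push_cast; ring
      rw [h2]
      exact Nat.cast_ne_zero.mpr (by omega)
    · intro h
      apply hγ3 (m + 1)
      push_cast
      linear_combination h
  have haN1 : a (N + 1) = 0 := hq0
  have haN2 : a (N + 2) = 0 := by
    have h := hr N
    rw [haN1, hNz] at h
    simp only [neg_zero, zero_mul, mul_zero, add_zero] at h
    exact (mul_eq_zero.mp h).resolve_left (hGne N)
  have hstep : ∀ m : ℕ, a m = 0 → a (m + 1) = 0 → a (m + 2) = 0 := by
    intro m hm hm1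
    have h := hr m
    rw [hm, hm1] at h
    simp only [mul_zero, add_zero, zero_add] at h
    exact (mul_eq_zero.mp h).resolve_left (hGne m)
  have hvan : ∀ k : ℕ, a (N + 1 + k) = 0 ∧ a (N + 2 + k) = 0 := by
    intro k
    induction k with
    | zero => exact ⟨haN1, haN2⟩
    | succ k ih =>
      have e1 : N + 1 + (k + 1) = N + 2 + k := by omega
      have e2 : N + 2 + (k + 1) = (N + 1 + k) + 2 := by omega
      have e3 : N + 1 + k + 1 = N + 2 + k := by omega
      refine ⟨by rw [e1]; exact ih.2, ?_⟩
      rw [e2]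
      exact hstep _ ih.1 (by rw [e3]; exact ih.2)
  refine ⟨?_, ?_, ?_⟩
  · -- y ≠ 0
    have hev : y.eval t3 = 1 := by
      rw [hy, eval_finset_sum]
      rw [Finset.sum_eq_single 0]
      · simp [ha, hc0]
      · intro b _ hb
        simp [sub_self, zero_pow hb]
      · intro h
        exact absurd (Finset.mem_range.mpr (Nat.succ_pos N)) h
    intro h
    rw [h] at hev
    simp at hev
  · -- degree bound
    rw [hy]
    apply Polynomial.natDegree_sum_le_of_forall_le
    intro i hi
    refine le_trans (natDegree_mul_le) ?_
    simp only [natDegree_C, zero_add]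
    refine le_trans (natDegree_pow_le) ?_
    rw [natDegree_X_sub_C, mul_one]
    exact Nat.lt_succ_iff.mp (Finset.mem_range.mp hi)
  · -- the differential equation
    show heunOp t1 t2 t3 γ1 γ2 γ3 α β q0 y = 0
    have hy3 : y = ∑ m ∈ Finset.range (N + 2 + 1), C (a m) * (X - C t3) ^ m := by
      rw [Finset.sum_range_succ, Finset.sum_range_succ, haN1, haN2]
      simp [hy, ha]
    rw [hy3, heun_aux t1 t2 t3 γ1 γ2 γ3 α β q0 a hsum h1 hr (N + 2)]
    have h3 : a (N + 2 + 1) = 0 := by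
      have h := (hvan 2).1
      rwa [show N + 1 + 2 = N + 2 + 1 from by omega] at h
    rw [haN2, h3]
    simp
end

section
/- Under the stated real hypotheses, for every m ≥ 0 the polynomial c_m(q) has degree exactly m in q, and the sign of its leading coefficient (the coefficient of q^m) is (−1)^m. -/
open Polynomial

/-- Each `c m` has degree exactly `m` and the sign of its leading
coefficient (the coefficient of `q^m`) is `(-1)^m`. -/
theorem heun_coeff_degree_sign
    (N : ℕ) (γ1 γ2 γ3 t1 t2 t3 α β : ℝ)
    (ht12 : t1 ≠ t2) (ht13 : t1 ≠ t3) (ht23 : t2 ≠ t3)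
    (hγ3 : 0 < γ3)
    (hsum : 1 < γ1 + γ2 + γ3 + N)
    (hprod : (t1 - t3) * (t2 - t3) < 0)
    (hαβ : ({α, β} : Set ℝ) = ({-(N : ℝ), γ1 + γ2 + γ3 + (N : ℝ) - 1} : Set ℝ))
    (c : ℕ → Polynomial ℝ)
    (hc0 : c 0 = 1)
    (hc1 : Polynomial.C ((t1 - t3) * (t2 - t3) * γ3) * c 1 = Polynomial.X * c 0)
    (hrec : ∀ m : ℕ,
      Polynomial.C ((t1 - t3) * (t2 - t3) * ((m : ℝ) + 2) * ((m : ℝ) + 1 + γ3)) * c (m + 2)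
        = Polynomial.C (-(((m : ℝ) + α) * ((m : ℝ) + β))) * c m
          + (Polynomial.C (((m : ℝ) + 1) * (((m : ℝ) + γ3) * (t1 + t2 - 2 * t3)
                + (t2 - t3) * γ1 + (t1 - t3) * γ2)) + Polynomial.X) * c (m + 1))
    : ∀ m : ℕ, (c m).degree = (m : ℕ) ∧ 0 < (-1 : ℝ) ^ m * (c m).coeff m := by
  -- statement for one index
  set S : ℕ → Prop := fun m => (c m).degree = (m : ℕ) ∧ 0 < (-1 : ℝ) ^ m * (c m).coeff m
    with hS
  -- base case m = 0
  have h0 : S 0 := by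
    constructor
    · rw [hc0]; simpa using Polynomial.degree_one
    · simp [hc0]
  -- base case m = 1
  have h1 : S 1 := by
    have hd1 : (t1 - t3) * (t2 - t3) * γ3 < 0 := mul_neg_of_neg_of_pos hprod hγ3
    have hc1' : Polynomial.C ((t1 - t3) * (t2 - t3) * γ3) * c 1 = Polynomial.X := by
      rw [hc1, hc0, mul_one]
    have hdeg : (c 1).degree = 1 := by
      have := congrArg Polynomial.degree hc1'
      rwa [Polynomial.degree_C_mul hd1.ne, Polynomial.degree_X] at this
    have hcoe : (t1 - t3) * (t2 - t3) * γ3 * (c 1).coeff 1 = 1 := by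
      have := congrArg (fun p => Polynomial.coeff p 1) hc1'
      simp only [Polynomial.coeff_C_mul, Polynomial.coeff_X_one] at this
      exact this
    constructor
    · exact_mod_cast hdeg
    · have hxneg : (c 1).coeff 1 < 0 := by
        by_contra h
        push_neg at h
        nlinarith
      simpa using neg_pos.mpr hxneg
  -- inductive step
  have hstep : ∀ m : ℕ, S m → S (m + 1) → S (m + 2) := by
    intro m hm hm1
    obtain ⟨hdm, hcm⟩ := hm
    obtain ⟨hdm1, hcm1⟩ := hm1
    set d : ℝ := (t1 - t3) * (t2 - t3) * ((m : ℝ) + 2) * ((m : ℝ) + 1 + γ3) with hd_def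
    have hd : d < 0 := by
      have h2 : (0:ℝ) < (m : ℝ) + 2 := by positivity
      have h3 : (0:ℝ) < (m : ℝ) + 1 + γ3 := by positivity
      exact mul_neg_of_neg_of_pos (mul_neg_of_neg_of_pos hprod h2) h3
    have hrm := hrec m
    -- coefficient at m+2
    have hz1 : (c m).coeff (m + 2) = 0 := by
      apply Polynomial.coeff_eq_zero_of_degree_lt
      rw [hdm]; exact_mod_cast Nat.lt_add_of_pos_right (by norm_num)
    have hz2 : (c (m + 1)).coeff (m + 2) = 0 := by
      apply Polynomial.coeff_eq_zero_of_degree_lt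
      rw [hdm1]; exact_mod_cast Nat.lt_succ_self (m + 1)
    have hcoe : d * (c (m + 2)).coeff (m + 2) = (c (m + 1)).coeff (m + 1) := by
      have := congrArg (fun p => Polynomial.coeff p (m + 2)) hrm
      simp only [Polynomial.coeff_C_mul, Polynomial.coeff_add, add_mul,
        Polynomial.coeff_X_mul, hz1, hz2, mul_zero] at this
      simpa using this
    have hne : (c (m + 2)).coeff (m + 2) ≠ 0 := by
      intro h
      rw [h, mul_zero] at hcoe
      have : (-1 : ℝ) ^ (m + 1) * (c (m + 1)).coeff (m + 1) = 0 := by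
        rw [← hcoe]; ring
      linarith
    -- degree bound
    have hdegle : (c (m + 2)).degree ≤ (m + 2 : ℕ) := by
      have heq : (c (m + 2)).degree =
          (Polynomial.C (-(((m : ℝ) + α) * ((m : ℝ) + β))) * c m
          + (Polynomial.C (((m : ℝ) + 1) * (((m : ℝ) + γ3) * (t1 + t2 - 2 * t3)
                + (t2 - t3) * γ1 + (t1 - t3) * γ2)) + Polynomial.X) * c (m + 1)).degree := by
        rw [← hrm, Polynomial.degree_C_mul hd.ne]
      rw [heq]
      apply le_trans (Polynomial.degree_add_le _ _)
      apply max_le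
      · apply le_trans (Polynomial.degree_mul_le _ _)
        calc (Polynomial.C (-(((m : ℝ) + α) * ((m : ℝ) + β)))).degree + (c m).degree
            ≤ 0 + (m : ℕ) := add_le_add Polynomial.degree_C_le (le_of_eq hdm)
          _ ≤ ((m + 2 : ℕ) : WithBot ℕ) := by
              rw [zero_add]; exact_mod_cast Nat.le_add_right m 2
      · apply le_trans (Polynomial.degree_mul_le _ _)
        calc (Polynomial.C (((m : ℝ) + 1) * (((m : ℝ) + γ3) * (t1 + t2 - 2 * t3)
                + (t2 - t3) * γ1 + (t1 - t3) * γ2)) + Polynomial.X).degree + (c (m + 1)).degree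
            ≤ 1 + ((m + 1 : ℕ) : WithBot ℕ) := by
              apply add_le_add _ (le_of_eq hdm1)
              apply le_trans (Polynomial.degree_add_le _ _)
              apply max_le
              · exact le_trans Polynomial.degree_C_le (by norm_num)
              · exact le_of_eq Polynomial.degree_X
          _ = ((m + 2 : ℕ) : WithBot ℕ) := by
              push_cast
              ring
    refine ⟨Polynomial.degree_eq_of_le_of_coeff_ne_zero hdegle hne, ?_⟩
    -- sign
    have h2 : 0 < d * ((-1 : ℝ) ^ (m + 1) * (c (m + 2)).coeff (m + 2)) := by
      have : d * ((-1 : ℝ) ^ (m + 1) * (c (m + 2)).coeff (m + 2))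
          = (-1 : ℝ) ^ (m + 1) * (d * (c (m + 2)).coeff (m + 2)) := by ring
      rw [this, hcoe]; exact hcm1
    have h3 : (-1 : ℝ) ^ (m + 1) * (c (m + 2)).coeff (m + 2) < 0 := by
      by_contra h
      push_neg at h
      nlinarith
    have : (-1 : ℝ) ^ (m + 2) = -((-1 : ℝ) ^ (m + 1)) := by ring
    rw [this]
    nlinarith
  intro m
  have key : ∀ n : ℕ, S n ∧ S (n + 1) := by
    intro n
    induction n with
    | zero => exact ⟨h0, h1⟩
    | succ k ih => exact ⟨ih.2, hstep k ih.1 ih.2⟩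
  exact (key m).1
end

section
/- Under the stated real hypotheses, if 1 ≤ m ≤ N and q ∈ ℝ satisfies c_m(q) = 0, then the values c_{m+1}(q) and c_{m−1}(q) are nonzero and of opposite sign, i.e. c_{m+1}(q)·c_{m−1}(q) < 0. -/
open Polynomial

/-- If `1 ≤ m ≤ N` and `c m` vanishes at `q`, then `c (m+1)` and
`c (m-1)` take nonzero values of opposite sign at `q`. -/
theorem heun_coeff_alternate
    (N : ℕ) (γ1 γ2 γ3 t1 t2 t3 α β : ℝ)
    (ht12 : t1 ≠ t2) (ht13 : t1 ≠ t3) (ht23 : t2 ≠ t3)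
    (hγ3 : 0 < γ3)
    (hsum : 1 < γ1 + γ2 + γ3 + N)
    (hprod : (t1 - t3) * (t2 - t3) < 0)
    (hαβ : ({α, β} : Set ℝ) = ({-(N : ℝ), γ1 + γ2 + γ3 + (N : ℝ) - 1} : Set ℝ))
    (c : ℕ → Polynomial ℝ)
    (hc0 : c 0 = 1)
    (hc1 : Polynomial.C ((t1 - t3) * (t2 - t3) * γ3) * c 1 = Polynomial.X * c 0)
    (hrec : ∀ m : ℕ,
      Polynomial.C ((t1 - t3) * (t2 - t3) * ((m : ℝ) + 2) * ((m : ℝ) + 1 + γ3)) * c (m + 2)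
        = Polynomial.C (-(((m : ℝ) + α) * ((m : ℝ) + β))) * c m
          + (Polynomial.C (((m : ℝ) + 1) * (((m : ℝ) + γ3) * (t1 + t2 - 2 * t3)
                + (t2 - t3) * γ1 + (t1 - t3) * γ2)) + Polynomial.X) * c (m + 1))
    : ∀ m : ℕ, 1 ≤ m → m ≤ N → ∀ q : ℝ, (c m).eval q = 0 →
      (c (m + 1)).eval q * (c (m - 1)).eval q < 0 := by
  set s : ℝ := γ1 + γ2 + γ3 + (N : ℝ) - 1 with hs
  have hNnn : (0:ℝ) ≤ (N:ℝ) := Nat.cast_nonneg N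
  have hspos : 0 < s := by rw [hs]; linarith
  have hsne : s ≠ -(N:ℝ) := by intro h; rw [h] at hspos; linarith
  have hαβ' : (α = -(N:ℝ) ∧ β = s) ∨ (α = s ∧ β = -(N:ℝ)) := by
    have hmemα : α = -(N:ℝ) ∨ α = s := by
      have : α ∈ ({α, β} : Set ℝ) := Set.mem_insert _ _
      rw [hαβ] at this; simpa using this
    have hmems : s = α ∨ s = β := by
      have : s ∈ ({-(N:ℝ), s} : Set ℝ) := by simp
      rw [← hαβ] at this; simpa using this
    have hmemN : -(N:ℝ) = α ∨ -(N:ℝ) = β := by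
      have : -(N:ℝ) ∈ ({-(N:ℝ), s} : Set ℝ) := by simp
      rw [← hαβ] at this; simpa using this
    rcases hmemα with h | h
    · left; refine ⟨h, ?_⟩
      rcases hmems with h2 | h2
      · exact absurd (h2.trans h) hsne
      · exact h2.symm
    · right; refine ⟨h, ?_⟩
      rcases hmemN with h2 | h2
      · exact absurd (h2.trans h).symm hsne
      · exact h2.symm
  have hkey : ∀ x : ℝ, (x + α) * (x + β) = (x - N) * (x + s) := by
    rcases hαβ' with ⟨h1, h2⟩ | ⟨h1, h2⟩ <;> subst h1 <;> subst h2 <;> intro x <;> ring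
  have heval : ∀ (k : ℕ) (q : ℝ),
      ((t1 - t3) * (t2 - t3) * ((k : ℝ) + 2) * ((k : ℝ) + 1 + γ3)) * (c (k + 2)).eval q
        = (-(((k : ℝ) - N) * ((k : ℝ) + s))) * (c k).eval q
          + ((((k : ℝ) + 1) * (((k : ℝ) + γ3) * (t1 + t2 - 2 * t3)
              + (t2 - t3) * γ1 + (t1 - t3) * γ2)) + q) * (c (k + 1)).eval q := by
    intro k q
    have := congrArg (eval q) (hrec k)
    simpa [hkey] using this
  have hA : ∀ k : ℕ, (t1 - t3) * (t2 - t3) * ((k : ℝ) + 2) * ((k : ℝ) + 1 + γ3) < 0 := by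
    intro k
    have h1 : (0:ℝ) < (k:ℝ) + 2 := by positivity
    have h2 : (0:ℝ) < (k:ℝ) + 1 + γ3 := by positivity
    have := mul_neg_of_neg_of_pos (mul_neg_of_neg_of_pos hprod h1) h2
    linarith [this]
  have hP : ∀ k : ℕ, k < N → 0 < -(((k : ℝ) - N) * ((k : ℝ) + s)) := by
    intro k hk
    have h1 : (k:ℝ) - N < 0 := by
      have : (k:ℝ) < N := by exact_mod_cast hk
      linarith
    have h2 : (0:ℝ) < (k:ℝ) + s := by positivity
    nlinarith
  -- no two consecutive zeros
  have hcons : ∀ (k : ℕ), ∀ q : ℝ, k + 1 ≤ N → (c (k + 1)).eval q = 0 →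
      (c k).eval q ≠ 0 := by
    intro k
    induction k with
    | zero => intro q _ _; simp [hc0]
    | succ k ih =>
      intro q hkN h2 h1
      have hk : k < N := by omega
      have he := heval k q
      rw [h1, h2] at he
      have hA' := hA k
      have hck : (c k).eval q = 0 := by
        have hP' := hP k hk
        have : -(((k : ℝ) - N) * ((k : ℝ) + s)) * (c k).eval q = 0 := by linarith
        rcases mul_eq_zero.mp this with h | h
        · exact absurd h (ne_of_gt hP')
        · exact h
      exact ih q (by omega) h1 hck
  intro m hm1 hmN q hq
  obtain ⟨k, rfl⟩ : ∃ k, m = k + 1 := ⟨m - 1, by omega⟩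
  have hck : (c k).eval q ≠ 0 := hcons k q hmN hq
  have he := heval k q
  rw [hq] at he
  have hA' := hA k
  have hP' := hP k (by omega)
  have hsq : 0 < (c k).eval q ^ 2 := by positivity
  have hrel : ((t1 - t3) * (t2 - t3) * ((k : ℝ) + 2) * ((k : ℝ) + 1 + γ3)) *
      ((c (k + 2)).eval q * (c k).eval q)
      = (-(((k : ℝ) - N) * ((k : ℝ) + s))) * (c k).eval q ^ 2 := by
    linear_combination (eval q (c k)) * he
  have hrhs : 0 < (-(((k : ℝ) - N) * ((k : ℝ) + s))) * (c k).eval q ^ 2 :=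
    mul_pos hP' hsq
  have : (c (k + 2)).eval q * (c k).eval q < 0 := by nlinarith
  simpa using this
end

section
/- Under the stated real hypotheses, the polynomial c_{N+1}(q), which has degree N+1, has all of its roots real and unequal; that is, c_{N+1} has exactly N+1 distinct real roots. -/
/-!
Rescaling `c k` by `∏ j < k, κ j` with `κ j = (t1 - t3) (t2 - t3) (j + 1) (j + γ3) < 0` turns the
recurrence into a monic three-term recurrence `p (k+2) = (X + b k) p (k+1) - a k p k` with
`a k = (k + α) (k + β) κ k`, and `a k > 0` for `k < N` because one of `α, β` is `-N` and the other
is positive. As for orthogonal polynomials, such a recurrence with positive `a k` has real simple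
zeros: the Wronskian `p k (p (k+1))' - (p k)' p (k+1)` at a real point, and
`Im z · Im (p (k+1) (z) · conj (p k (z)))`, both satisfy `f (k+1) = (nonneg) + a k · f k` with
`f 0 > 0`. At a zero `z` of `p (n+1)` the latter vanishes for `k = n`, forcing `Im z = 0`;
positivity of the former rules out double roots.
-/

open Polynomial

theorem pos_of_succ_eq_add_mul {n : ℕ} {f s a : ℕ → ℝ} (h0 : 0 < f 0)
    (hs : ∀ k < n, 0 ≤ s k) (ha : ∀ k < n, 0 < a k)
    (hf : ∀ k < n, f (k + 1) = s k + a k * f k) : ∀ k ≤ n, 0 < f k := by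
  intro k
  induction k with
  | zero => exact fun _ => h0
  | succ k ih =>
    intro hk
    rw [hf k hk]
    exact add_pos_of_nonneg_of_pos (hs k hk) (mul_pos (ha k hk) (ih (by omega)))

theorem Complex.im_three_term_mul_conj (z u v : ℂ) (b a : ℝ) :
    (((z + b) * v - a * u) * (starRingEnd ℂ) v).im
      = z.im * Complex.normSq v + a * (v * (starRingEnd ℂ) u).im := by
  simp only [Complex.mul_im, Complex.mul_re, Complex.sub_im, Complex.sub_re, Complex.add_re,
    Complex.add_im, Complex.ofReal_re, Complex.ofReal_im, Complex.conj_re, Complex.conj_im,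
    Complex.normSq_apply]
  ring

namespace Polynomial

section CommRing

variable {R : Type*} [CommRing R] {n : ℕ} {a b : ℕ → R} {p : ℕ → R[X]}

theorem monic_natDegree_of_recurrence [Nontrivial R] (hp0 : p 0 = 1) (hp1 : p 1 = X)
    (hrec : ∀ k < n, p (k + 2) = (X + C (b k)) * p (k + 1) - C (a k) * p k) :
    ∀ k ≤ n + 1, (p k).Monic ∧ (p k).natDegree = k := by
  suffices h : ∀ k ≤ n, ((p k).Monic ∧ (p k).natDegree = k) ∧
      (p (k + 1)).Monic ∧ (p (k + 1)).natDegree = k + 1 by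
    intro k hk
    rcases k with _ | k
    exacts [(h 0 (Nat.zero_le n)).1, (h k (by omega)).2]
  intro k
  induction k with
  | zero => simp [hp0, hp1]
  | succ k ih =>
    intro hk
    obtain ⟨⟨-, hdeg₀⟩, hmon, hdeg⟩ := ih (by omega)
    have hlead : ((X + C (b k)) * p (k + 1)).natDegree = k + 2 := by
      rw [(monic_X_add_C _).natDegree_mul hmon, natDegree_X_add_C, hdeg, add_comm]
    have hlt : (C (a k) * p k).natDegree < ((X + C (b k)) * p (k + 1)).natDegree := by
      rw [hlead]
      exact (natDegree_C_mul_le _ _).trans_lt (by omega)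
    rw [hrec k (by omega)]
    refine ⟨⟨hmon, hdeg⟩,
      ((monic_X_add_C _).mul hmon).sub_of_left (degree_lt_degree hlt), ?_⟩
    rw [natDegree_sub_eq_left_of_natDegree_lt hlt, hlead]

theorem wronskian_three_term (f g : R[X]) (b a : R) :
    wronskian g ((X + C b) * g - C a * f) = g ^ 2 + C a * wronskian f g := by
  simp only [wronskian, derivative_sub, derivative_mul, derivative_add, derivative_X,
    derivative_C]
  ring

end CommRing

section Real

variable {n : ℕ} {a b : ℕ → ℝ} {p : ℕ → ℝ[X]}

theorem eval_wronskian_pos_of_recurrence (ha : ∀ k < n, 0 < a k) (hp0 : p 0 = 1)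
    (hp1 : p 1 = X) (hrec : ∀ k < n, p (k + 2) = (X + C (b k)) * p (k + 1) - C (a k) * p k)
    (x : ℝ) : ∀ k ≤ n, 0 < eval x (wronskian (p k) (p (k + 1))) :=
  pos_of_succ_eq_add_mul (by simp [hp0, hp1, wronskian]) (fun k _ => sq_nonneg _) ha
    fun k hk => by rw [hrec k hk, wronskian_three_term, eval_add, eval_mul, eval_C, eval_pow]

theorem im_eq_zero_of_aeval_eq_zero_of_recurrence (ha : ∀ k < n, 0 < a k) (hp0 : p 0 = 1)
    (hp1 : p 1 = X) (hrec : ∀ k < n, p (k + 2) = (X + C (b k)) * p (k + 1) - C (a k) * p k)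
    {z : ℂ} (hz : aeval z (p (n + 1)) = 0) : z.im = 0 := by
  by_contra him
  let f k := z.im * (aeval z (p (k + 1)) * (starRingEnd ℂ) (aeval z (p k))).im
  have hf : ∀ k < n,
      f (k + 1) = z.im ^ 2 * Complex.normSq (aeval z (p (k + 1))) + a k * f k := by
    intro k hk
    simp only [f, hrec k hk, map_sub, map_mul, map_add, aeval_X, aeval_C,
      Complex.coe_algebraMap, Complex.im_three_term_mul_conj]
    ring
  have hpos := pos_of_succ_eq_add_mul (f := f) (by simp [f, hp0, hp1, him])
    (fun k _ => mul_nonneg (sq_nonneg _) (Complex.normSq_nonneg _)) ha hf n le_rfl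
  simp [f, hz] at hpos

theorem card_roots_eq_natDegree_of_forall_im_eq_zero (q : ℝ[X])
    (h : ∀ z : ℂ, aeval z q = 0 → z.im = 0) : Multiset.card q.roots = q.natDegree := by
  classical
  have hreal : (q.map (algebraMap ℝ ℂ)).roots.filter (· ∈ (algebraMap ℝ ℂ).range)
      = (q.map (algebraMap ℝ ℂ)).roots := by
    refine Multiset.filter_eq_self.mpr fun z hz => ⟨z.re, ?_⟩
    have him := h z (by rw [aeval_def, eval₂_eq_eval_map]; exact (mem_roots'.mp hz).2)
    exact Complex.ext (by simp) (by simp [him])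
  rw [← Multiset.card_map (algebraMap ℝ ℂ),
    ← filter_roots_map_range_eq_map_roots (algebraMap ℝ ℂ).injective, hreal,
    IsAlgClosed.card_roots_map_eq_natDegree_of_injective _ (algebraMap ℝ ℂ).injective]

theorem nodup_roots_of_forall_not_isRoot_derivative {R : Type*} [CommRing R] [IsDomain R]
    {q : R[X]} (h : ∀ x, q.IsRoot x → ¬(derivative q).IsRoot x) : q.roots.Nodup := by
  classical
  rcases eq_or_ne q 0 with rfl | hq
  · simp
  refine Multiset.nodup_iff_count_le_one.mpr fun x => ?_
  rw [count_roots]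
  by_contra! hx
  exact ((one_lt_rootMultiplicity_iff_isRoot hq).mp hx).elim (h x)

theorem nodup_roots_card_of_recurrence (ha : ∀ k < n, 0 < a k) (hp0 : p 0 = 1)
    (hp1 : p 1 = X) (hrec : ∀ k < n, p (k + 2) = (X + C (b k)) * p (k + 1) - C (a k) * p k) :
    (p (n + 1)).roots.Nodup ∧ Multiset.card (p (n + 1)).roots = n + 1 := by
  refine ⟨nodup_roots_of_forall_not_isRoot_derivative fun x hx hx' => ?_, ?_⟩
  · have hW := eval_wronskian_pos_of_recurrence ha hp0 hp1 hrec x n le_rfl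
    simp [wronskian, hx.eq_zero, hx'.eq_zero] at hW
  · rw [card_roots_eq_natDegree_of_forall_im_eq_zero _ fun z =>
      im_eq_zero_of_aeval_eq_zero_of_recurrence ha hp0 hp1 hrec]
    exact (monic_natDegree_of_recurrence hp0 hp1 hrec (n + 1) le_rfl).2

end Real

theorem C_prod_range_mul_three_term {R : Type*} [CommRing R] {κ e b : ℕ → R} {c : ℕ → R[X]}
    (hrec : ∀ k, C (κ (k + 1)) * c (k + 2) = C (-e k) * c k + (C (b k) + X) * c (k + 1))
    (k : ℕ) :
    C (∏ j ∈ Finset.range (k + 2), κ j) * c (k + 2)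
      = (X + C (b k)) * (C (∏ j ∈ Finset.range (k + 1), κ j) * c (k + 1))
        - C (e k * κ k) * (C (∏ j ∈ Finset.range k, κ j) * c k) := by
  rw [Finset.prod_range_succ, C_mul, mul_assoc, hrec, Finset.prod_range_succ]
  simp only [C_mul, C_neg]
  ring

end Polynomial

theorem add_mul_add_neg_of_pair_eq {N m : ℕ} {α β G : ℝ} (hG : 0 < G)
    (hαβ : ({α, β} : Set ℝ) = {-(N : ℝ), G}) (hm : m < N) :
    ((m : ℝ) + α) * ((m : ℝ) + β) < 0 := by
  have hmN : (m : ℝ) < N := by exact_mod_cast hm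
  have hfactor : ((m : ℝ) + α) * ((m : ℝ) + β) = ((m : ℝ) - N) * ((m : ℝ) + G) := by
    rcases Set.pair_eq_pair_iff.mp hαβ with ⟨rfl, rfl⟩ | ⟨rfl, rfl⟩ <;> ring
  rw [hfactor]
  exact mul_neg_of_neg_of_pos (by linarith) (by positivity)

theorem heun_cNplus1_real_distinct_roots_general
    (N : ℕ) (γ1 γ2 γ3 t1 t2 t3 α β : ℝ)
    (hγ3 : 0 < γ3)
    (hsum : 1 < γ1 + γ2 + γ3 + N)
    (hprod : (t1 - t3) * (t2 - t3) < 0)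
    (hαβ : ({α, β} : Set ℝ) = ({-(N : ℝ), γ1 + γ2 + γ3 + (N : ℝ) - 1} : Set ℝ))
    (c : ℕ → Polynomial ℝ)
    (hc0 : c 0 = 1)
    (hc1 : Polynomial.C ((t1 - t3) * (t2 - t3) * γ3) * c 1 = Polynomial.X * c 0)
    (hrec : ∀ m : ℕ,
      Polynomial.C ((t1 - t3) * (t2 - t3) * ((m : ℝ) + 2) * ((m : ℝ) + 1 + γ3)) * c (m + 2)
        = Polynomial.C (-(((m : ℝ) + α) * ((m : ℝ) + β))) * c m
          + (Polynomial.C (((m : ℝ) + 1) * (((m : ℝ) + γ3) * (t1 + t2 - 2 * t3)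
                + (t2 - t3) * γ1 + (t1 - t3) * γ2)) + Polynomial.X) * c (m + 1))
    : (c (N + 1)).degree = ((N + 1 : ℕ) : WithBot ℕ) ∧
      ∃ S : Finset ℝ, S.card = N + 1 ∧ (∀ x ∈ S, (c (N + 1)).IsRoot x) ∧
        ∀ x : ℝ, (c (N + 1)).IsRoot x → x ∈ S := by
  set κ : ℕ → ℝ := fun j => (t1 - t3) * (t2 - t3) * ((j : ℝ) + 1) * ((j : ℝ) + γ3)
  have hκ : ∀ j, κ j < 0 := fun j =>
    mul_neg_of_neg_of_pos (mul_neg_of_neg_of_pos hprod (by positivity)) (by positivity)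
  have hΛ : ∀ k, ∏ j ∈ Finset.range k, κ j ≠ 0 := fun k =>
    Finset.prod_ne_zero_iff.mpr fun j _ => (hκ j).ne
  have hκ_succ : ∀ m : ℕ, (t1 - t3) * (t2 - t3) * ((m : ℝ) + 2) * ((m : ℝ) + 1 + γ3)
      = κ (m + 1) := fun m => by simp only [κ]; push_cast; ring
  simp only [hκ_succ] at hrec
  set p : ℕ → ℝ[X] := fun k => C (∏ j ∈ Finset.range k, κ j) * c k
  have hp0 : p 0 = 1 := by simp [p, hc0]
  have hp1 : p 1 = X := by simpa [p, κ, hc0] using hc1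
  have hrecp : ∀ k < N, p (k + 2) = (X + C _) * p (k + 1) - C _ * p k := fun k _ =>
    C_prod_range_mul_three_term hrec k
  have ha : ∀ k < N, 0 < ((k : ℝ) + α) * ((k : ℝ) + β) * κ k := fun k hk =>
    mul_pos_of_neg_of_neg (add_mul_add_neg_of_pair_eq (by linarith) hαβ hk) (hκ k)
  obtain ⟨hmon, hdeg⟩ := monic_natDegree_of_recurrence hp0 hp1 hrecp (N + 1) le_rfl
  obtain ⟨hnodup, hcard⟩ := nodup_roots_card_of_recurrence ha hp0 hp1 hrecp
  have hdegc : (c (N + 1)).degree = (N + 1 : ℕ) := by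
    rw [← degree_C_mul (hΛ (N + 1)), degree_eq_natDegree hmon.ne_zero, hdeg]
  have hc : c (N + 1) ≠ 0 := right_ne_zero_of_mul hmon.ne_zero
  refine ⟨hdegc, (c (N + 1)).roots.toFinset, ?_, fun x hx => ?_, fun x hx => ?_⟩
  · rw [← roots_C_mul _ (hΛ (N + 1)), Multiset.toFinset_card_of_nodup hnodup, hcard]
  · exact (mem_roots hc).mp (Multiset.mem_toFinset.mp hx)
  · exact Multiset.mem_toFinset.mpr ((mem_roots hc).mpr hx)

/-- The polynomial `c (N+1)` has degree `N+1` and all of its roots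
are real and unequal: it has exactly `N+1` distinct real roots. -/
theorem heun_cNplus1_real_distinct_roots
    (N : ℕ) (γ1 γ2 γ3 t1 t2 t3 α β : ℝ)
    (ht12 : t1 ≠ t2) (ht13 : t1 ≠ t3) (ht23 : t2 ≠ t3)
    (hγ3 : 0 < γ3)
    (hsum : 1 < γ1 + γ2 + γ3 + N)
    (hprod : (t1 - t3) * (t2 - t3) < 0)
    (hαβ : ({α, β} : Set ℝ) = ({-(N : ℝ), γ1 + γ2 + γ3 + (N : ℝ) - 1} : Set ℝ))
    (c : ℕ → Polynomial ℝ)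
    (hc0 : c 0 = 1)
    (hc1 : Polynomial.C ((t1 - t3) * (t2 - t3) * γ3) * c 1 = Polynomial.X * c 0)
    (hrec : ∀ m : ℕ,
      Polynomial.C ((t1 - t3) * (t2 - t3) * ((m : ℝ) + 2) * ((m : ℝ) + 1 + γ3)) * c (m + 2)
        = Polynomial.C (-(((m : ℝ) + α) * ((m : ℝ) + β))) * c m
          + (Polynomial.C (((m : ℝ) + 1) * (((m : ℝ) + γ3) * (t1 + t2 - 2 * t3)
                + (t2 - t3) * γ1 + (t1 - t3) * γ2)) + Polynomial.X) * c (m + 1))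
    : (c (N + 1)).degree = ((N + 1 : ℕ) : WithBot ℕ) ∧
      ∃ S : Finset ℝ, S.card = N + 1 ∧ (∀ x ∈ S, (c (N + 1)).IsRoot x) ∧
        ∀ x : ℝ, (c (N + 1)).IsRoot x → x ∈ S :=
  heun_cNplus1_real_distinct_roots_general N γ1 γ2 γ3 t1 t2 t3 α β hγ3 hsum hprod hαβ c hc0 hc1 hrec
end

section
/- Under the stated real hypotheses, for every 1 ≤ r ≤ N+1 the polynomial c_r(q) has exactly r distinct real roots s_1^{(r)} < s_2^{(r)} < ⋯ < s_r^{(r)}, and these roots strictly interlace with those of c_{r−1}: for every 2 ≤ r ≤ N+1 and every 1 ≤ i ≤ r−1 one has s_i^{(r)} < s_i^{(r−1)} < s_{i+1}^{(r)}. -/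
/-!
Sturm-sequence argument. The recurrence reads `e m * c (m+2) = a m * c m + (b m + X) * c (m+1)`
with `e m < 0` (because `(t1 - t3) * (t2 - t3) < 0`) and, for `m < N`,
`a m = -(m + α) * (m + β) = (N - m) * (m + γ1 + γ2 + γ3 + N - 1) > 0`. At a root of `c (m+1)` the
recurrence gives `c (m+2)` the sign of `-c m`; if the roots of `c m` interlace those of `c (m+1)`,
these values alternate in sign, so `c (m+2)` vanishes between consecutive roots of `c (m+1)`, and,
comparing with the sign of its leading coefficient at `±∞`, also before the first and after the
last one. These are `m + 2` roots, hence all of them, and they interlace those of `c (m+1)`.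
-/

open Polynomial Finset

namespace Polynomial

variable {R : Type*} [CommRing R]

theorem eval_C_mul_prod_X_sub_C (L x : R) (u : ℕ → R) (n : ℕ) :
    (C L * ∏ i ∈ range n, (X - C (u i))).eval x = L * ∏ i ∈ range n, (x - u i) := by
  simp [eval_prod]

variable [IsDomain R]

theorem natDegree_C_mul_prod_X_sub_C {L : R} (hL : L ≠ 0) (u : ℕ → R) (n : ℕ) :
    (C L * ∏ i ∈ range n, (X - C (u i))).natDegree = n := by
  rw [natDegree_C_mul hL, natDegree_prod_of_monic _ _ fun i _ => monic_X_sub_C (u i)]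
  simp

theorem leadingCoeff_C_mul_prod_X_sub_C (L : R) (u : ℕ → R) (n : ℕ) :
    (C L * ∏ i ∈ range n, (X - C (u i))).leadingCoeff = L := by
  rw [leadingCoeff_mul, leadingCoeff_C, (monic_prod_of_monic _ _ fun i _ =>
    monic_X_sub_C (u i)).leadingCoeff, mul_one]

theorem eval_C_mul_prod_X_sub_C_eq_zero_iff {L : R} (hL : L ≠ 0) {u : ℕ → R} {n : ℕ} {x : R} :
    (C L * ∏ i ∈ range n, (X - C (u i))).eval x = 0 ↔ ∃ i < n, x = u i := by
  rw [eval_C_mul_prod_X_sub_C, mul_eq_zero, prod_eq_zero_iff]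
  simp [hL, sub_eq_zero]

theorem eq_C_leadingCoeff_mul_prod_X_sub_C {p : R[X]} {n : ℕ} {v : ℕ → R}
    (hdeg : p.natDegree = n) (hv : Set.InjOn v (range n)) (hroot : ∀ i < n, p.IsRoot (v i)) :
    p = C p.leadingCoeff * ∏ i ∈ range n, (X - C (v i)) := by
  rcases eq_or_ne p 0 with rfl | hp
  · simp [← hdeg]
  classical
  have hle : ((range n).image v).val ≤ p.roots := by
    refine (Multiset.le_iff_subset (image v (range n)).nodup).2 fun x hx => ?_
    obtain ⟨i, hi, rfl⟩ := mem_image.1 (mem_def.2 hx)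
    exact (mem_roots hp).2 (hroot i (mem_range.1 hi))
  have hdvd := (Multiset.prod_X_sub_C_dvd_iff_le_roots hp _).2 hle
  rw [← prod_eq_multiset_prod, prod_image hv] at hdvd
  refine eq_leadingCoeff_mul_of_monic_of_dvd_of_natDegree_le
    (monic_prod_of_monic _ _ fun i _ => monic_X_sub_C (v i)) hdvd ?_
  rw [natDegree_prod_of_monic _ _ fun i _ => monic_X_sub_C (v i)]
  simp [hdeg]

theorem natDegree_leadingCoeff_of_recurrence {p q r : R[X]} {e a b : R} {n : ℕ} (he : e ≠ 0)
    (hp : p.natDegree ≤ n) (hq : q.natDegree = n + 1) (hr : C e * r = C a * p + (C b + X) * q) :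
    r.natDegree = n + 2 ∧ e * r.leadingCoeff = q.leadingCoeff := by
  have hq0 : q ≠ 0 := by rintro rfl; simp at hq
  rw [add_comm (C b)] at hr
  have hXq : ((X + C b) * q).natDegree = n + 2 := by
    rw [natDegree_mul (X_add_C_ne_zero b) hq0, natDegree_X_add_C, hq]; ring
  have hlt : (C a * p).natDegree < ((X + C b) * q).natDegree := by
    linarith [natDegree_C_mul_le a p]
  have hdeg := congrArg natDegree hr
  have hlc := congrArg leadingCoeff hr
  rw [natDegree_C_mul he, natDegree_add_eq_right_of_natDegree_lt hlt, hXq] at hdeg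
  rw [leadingCoeff_mul, leadingCoeff_C, leadingCoeff_add_of_degree_lt (degree_lt_degree hlt),
    leadingCoeff_monic_mul (monic_X_add_C b)] at hlc
  exact ⟨hdeg, hlc⟩

variable {p : ℝ[X]}

theorem exists_isRoot_mem_Ioo_of_eval_mul_eval_neg {a b : ℝ} (hab : a < b)
    (h : p.eval a * p.eval b < 0) : ∃ x ∈ Set.Ioo a b, p.IsRoot x := by
  have h0 : (0 : ℝ) ∈ Set.uIcc (p.eval a) (p.eval b) := by
    rw [Set.mem_uIcc]
    rcases lt_or_ge (p.eval a) 0 with ha | ha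
    · exact Or.inl ⟨ha.le, by nlinarith⟩
    · exact Or.inr ⟨by nlinarith, ha⟩
  obtain ⟨x, hx, hpx⟩ := intermediate_value_uIcc p.continuous.continuousOn h0
  rw [Set.uIcc_of_le hab.le] at hx
  have hxa : x ≠ a := by rintro rfl; simp [hpx] at h
  have hxb : x ≠ b := by rintro rfl; simp [hpx] at h
  exact ⟨x, ⟨lt_of_le_of_ne hx.1 hxa.symm, lt_of_le_of_ne hx.2 hxb⟩, hpx⟩

theorem exists_isRoot_gt_of_leadingCoeff_mul_eval_neg {a : ℝ}
    (h : p.leadingCoeff * p.eval a < 0) : ∃ x, a < x ∧ p.IsRoot x := by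
  by_contra! hroots
  have hlt : ∀ y, p.IsRoot y → y < a := fun y hy =>
    lt_of_le_of_ne (not_lt.1 fun hay => hroots y hay hy) (by rintro rfl; simp [hy.eq_zero] at h)
  rcases le_total 0 p.leadingCoeff with hlc | hlc
  · nlinarith [zero_lt_eval_of_roots_lt_of_leadingCoeff_nonneg hlt hlc]
  · nlinarith [eval_lt_zero_of_roots_lt_of_leadingCoeff_nonpos hlt hlc]

theorem exists_isRoot_lt_of_neg_one_pow_mul_leadingCoeff_mul_eval_neg {a : ℝ}
    (h : (-1) ^ p.natDegree * p.leadingCoeff * p.eval a < 0) : ∃ x, x < a ∧ p.IsRoot x := by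
  by_contra! hroots
  have hgt : ∀ y, p.IsRoot y → a < y := fun y hy =>
    lt_of_le_of_ne (not_lt.1 fun hya => hroots y hya hy) (by rintro rfl; simp [hy.eq_zero] at h)
  have hsign : ((p.natDegree : ℤ).negOnePow : ℝ) = (-1) ^ p.natDegree :=
    Int.cast_negOnePow_natCast _ _
  rcases le_total 0 p.leadingCoeff with hlc | hlc
  · have := zero_lt_negOnePow_mul_eval_of_lt_roots_of_leadingCoeff_nonneg hgt hlc
    rw [hsign] at this
    nlinarith
  · have := negOnePow_mul_eval_lt_zero_of_lt_roots_of_leadingCoeff_nonpos hgt hlc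
    rw [hsign] at this
    nlinarith

end Polynomial

theorem mul_add_eq_of_pair_eq {R : Type*} [CommRing R] {α β γ δ : R}
    (h : ({α, β} : Set R) = {γ, δ}) (x : R) : (x + α) * (x + β) = (x + γ) * (x + δ) := by
  rcases Set.pair_eq_pair_iff.1 h with ⟨rfl, rfl⟩ | ⟨rfl, rfl⟩ <;> ring

def Interlacing (v u : ℕ → ℝ) (n : ℕ) : Prop :=
  ∀ i < n, v i < u i ∧ u i < v (i + 1)

namespace Interlacing

variable {v u : ℕ → ℝ} {n : ℕ}

theorem strictMonoOn (h : Interlacing v u n) : StrictMonoOn v (Set.Iic n) :=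
  strictMonoOn_Iic_of_lt_succ fun i hi => ((h i hi).1.trans (h i hi).2 :)

theorem lt_of_lt (h : Interlacing v u n) {i j : ℕ} (hij : i < j) (hj : j ≤ n) : u i < v j :=
  (h i (by omega)).2.trans_le <|
    h.strictMonoOn.monotoneOn (Set.mem_Iic.2 (by omega)) (Set.mem_Iic.2 hj) hij

theorem lt_of_le (h : Interlacing v u n) {i j : ℕ} (hji : j ≤ i) (hi : i < n) : v j < u i :=
  (h.strictMonoOn.monotoneOn (Set.mem_Iic.2 (by omega)) (Set.mem_Iic.2 hi.le) hji).trans_lt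
    (h i hi).1

theorem prod_sub_mul_prod_sub_neg (h : Interlacing v u n) {j : ℕ} (hj : j < n) :
    (∏ i ∈ range n, (v j - u i)) * ∏ i ∈ range n, (v (j + 1) - u i) < 0 := by
  rw [← prod_mul_distrib, ← mul_prod_erase _ _ (mem_range.2 hj)]
  refine mul_neg_of_neg_of_pos ?_ (prod_pos fun i hi => ?_)
  · exact mul_neg_of_neg_of_pos (sub_neg.2 (h j hj).1) (sub_pos.2 (h j hj).2)
  obtain ⟨hij, hi⟩ := mem_erase.1 hi
  have hi := mem_range.1 hi
  rcases lt_or_gt_of_ne hij with hij | hij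
  · exact mul_pos (sub_pos.2 (h.lt_of_lt hij (by omega))) (sub_pos.2 (h.lt_of_lt (by omega) hj))
  · exact mul_pos_of_neg_of_neg (sub_neg.2 (h.lt_of_le hij.le hi)) (sub_neg.2 (h.lt_of_le hij hi))

theorem prod_last_sub_pos (h : Interlacing v u n) : 0 < ∏ i ∈ range n, (v n - u i) :=
  prod_pos fun _ hi => sub_pos.2 <| h.lt_of_lt (mem_range.1 hi) le_rfl

theorem neg_one_pow_mul_prod_first_sub_pos (h : Interlacing v u n) :
    0 < (-1) ^ n * ∏ i ∈ range n, (v 0 - u i) := by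
  have hneg := prod_neg (s := range n) fun i => v 0 - u i
  rw [card_range] at hneg
  rw [← hneg]
  exact prod_pos fun i hi => neg_pos.2 <| sub_neg.2 <| h.lt_of_le (Nat.zero_le i) (mem_range.1 hi)

end Interlacing

theorem Interlacing.exists_interlacing_roots_of_eval_eq {r : ℝ[X]} {n : ℕ} {t u : ℕ → ℝ}
    {L M e a : ℝ} (hut : Interlacing u t n) (hLM : L * M < 0) (ha : 0 < a)
    (hdeg : r.natDegree = n + 2) (hlc : e * r.leadingCoeff = M)
    (hval : ∀ j ≤ n, e * r.eval (u j) = a * (L * ∏ i ∈ range n, (u j - t i))) :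
    ∃ w : ℕ → ℝ, (∀ j ≤ n + 1, r.IsRoot (w j)) ∧ Interlacing w u (n + 1) := by
  have hL : L ≠ 0 := by rintro rfl; simp at hLM
  have key : ∀ j ≤ n + 1, ∃ y, r.IsRoot y ∧ (0 < j → u (j - 1) < y) ∧ (j ≤ n → y < u j) := by
    rintro (_ | j) hj
    · have hsign : e ^ 2 * ((-1) ^ r.natDegree * r.leadingCoeff * r.eval (u 0))
          = a * (L * M) * ((-1) ^ n * ∏ i ∈ range n, (u 0 - t i)) := by
        rw [hdeg]
        linear_combination (-1) ^ n * (e * r.eval (u 0)) * hlc + (-1) ^ n * M * hval 0 (by omega)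
      obtain ⟨y, hy, hry⟩ := exists_isRoot_lt_of_neg_one_pow_mul_leadingCoeff_mul_eval_neg
        (neg_of_mul_neg_right (hsign ▸ mul_neg_of_neg_of_pos (mul_neg_of_pos_of_neg ha hLM)
          hut.neg_one_pow_mul_prod_first_sub_pos) (sq_nonneg e))
      exact ⟨y, hry, by omega, fun _ => hy⟩
    rcases (Nat.lt_succ_iff.1 hj).lt_or_eq with hjn | rfl
    · have hsign : e ^ 2 * (r.eval (u j) * r.eval (u (j + 1)))
          = (a * L) ^ 2 * ((∏ i ∈ range n, (u j - t i)) * ∏ i ∈ range n, (u (j + 1) - t i)) := by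
        linear_combination (e * r.eval (u (j + 1))) * hval j hjn.le
          + (a * L * ∏ i ∈ range n, (u j - t i)) * hval (j + 1) hjn
      obtain ⟨y, hy, hry⟩ := exists_isRoot_mem_Ioo_of_eval_mul_eval_neg
        (hut.strictMonoOn (Set.mem_Iic.2 hjn.le) (Set.mem_Iic.2 hjn) j.lt_succ_self)
        (neg_of_mul_neg_right (hsign ▸ mul_neg_of_pos_of_neg
          (pow_two_pos_of_ne_zero (mul_ne_zero ha.ne' hL)) (hut.prod_sub_mul_prod_sub_neg hjn))
          (sq_nonneg e))
      exact ⟨y, hry, fun _ => hy.1, fun _ => hy.2⟩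
    · have hsign : e ^ 2 * (r.leadingCoeff * r.eval (u j))
          = a * (L * M) * ∏ i ∈ range j, (u j - t i) := by
        linear_combination (e * r.eval (u j)) * hlc + M * hval j le_rfl
      obtain ⟨y, hy, hry⟩ := exists_isRoot_gt_of_leadingCoeff_mul_eval_neg
        (neg_of_mul_neg_right (hsign ▸ mul_neg_of_neg_of_pos (mul_neg_of_pos_of_neg ha hLM)
          hut.prod_last_sub_pos) (sq_nonneg e))
      exact ⟨y, hry, fun _ => hy, by omega⟩
  choose! w hroot hlo hhi using key
  exact ⟨w, hroot, fun i hi => ⟨hhi i hi.le (by omega), hlo (i + 1) hi i.succ_pos⟩⟩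

theorem Interlacing.exists_factorization_of_recurrence {p q r : ℝ[X]} {n : ℕ} {t u : ℕ → ℝ}
    {L M e a b : ℝ} (hp : p = C L * ∏ i ∈ range n, (X - C (t i)))
    (hq : q = C M * ∏ i ∈ range (n + 1), (X - C (u i)))
    (hLM : L * M < 0) (hut : Interlacing u t n) (he : e < 0) (ha : 0 < a)
    (hr : C e * r = C a * p + (C b + X) * q) :
    ∃ (K : ℝ) (w : ℕ → ℝ), r = C K * ∏ i ∈ range (n + 2), (X - C (w i)) ∧ M * K < 0 ∧
      Interlacing w u (n + 1) := by
  have hL : L ≠ 0 := by rintro rfl; simp at hLM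
  have hM : M ≠ 0 := by rintro rfl; simp at hLM
  obtain ⟨hdeg, hlc⟩ := natDegree_leadingCoeff_of_recurrence he.ne
    (hp ▸ (natDegree_C_mul_prod_X_sub_C hL t n).le)
    (hq ▸ natDegree_C_mul_prod_X_sub_C hM u (n + 1)) hr
  rw [hq, leadingCoeff_C_mul_prod_X_sub_C] at hlc
  -- `q` vanishes at the `u j`, so there `r` has the sign of `-p`.
  have hval : ∀ j ≤ n, e * r.eval (u j) = a * (L * ∏ i ∈ range n, (u j - t i)) := by
    intro j hj
    have hqj : q.eval (u j) = 0 := by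
      rw [hq, eval_C_mul_prod_X_sub_C_eq_zero_iff hM]
      exact ⟨j, by omega, rfl⟩
    simpa [hqj, hp, eval_prod] using congrArg (eval (u j)) hr
  obtain ⟨w, hroot, hw⟩ := hut.exists_interlacing_roots_of_eval_eq hLM ha hdeg hlc hval
  have hK : r.leadingCoeff ≠ 0 := by rintro hK; simp [hK] at hlc; exact hM hlc.symm
  refine ⟨r.leadingCoeff, w, eq_C_leadingCoeff_mul_prod_X_sub_C hdeg ?_
    (fun i hi => hroot i (Nat.lt_succ_iff.1 hi)), ?_, hw⟩
  · exact hw.strictMonoOn.injOn.mono fun i hi => Set.mem_Iic.2 (by simp at hi; omega)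
  · rw [← hlc, mul_assoc]
    exact mul_neg_of_neg_of_pos he (mul_self_pos.2 hK)

theorem exists_interlacing_roots_of_recurrence (c : ℕ → ℝ[X]) (e a b : ℕ → ℝ) {n : ℕ}
    {L₀ M₀ x₀ : ℝ} (h₀ : c 0 = C L₀) (h₁ : c 1 = C M₀ * (X - C x₀)) (hLM : L₀ * M₀ < 0)
    (he : ∀ m < n, e m < 0) (ha : ∀ m < n, 0 < a m)
    (hrec : ∀ m < n, C (e m) * c (m + 2) = C (a m) * c m + (C (b m) + X) * c (m + 1)) :
    ∃ (s : ℕ → ℕ → ℝ) (L : ℕ → ℝ),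
      (∀ r ≤ n + 1, c r = C (L r) * ∏ i ∈ range r, (X - C (s r i))) ∧
      ∀ r ≤ n, L r * L (r + 1) < 0 ∧ Interlacing (s (r + 1)) (s r) r := by
  induction n with
  | zero =>
    refine ⟨fun _ _ => x₀, fun r => if r = 0 then L₀ else M₀, fun r hr => ?_, fun r hr => ?_⟩
    · interval_cases r <;> simp [h₀, h₁]
    · obtain rfl : r = 0 := by omega
      exact ⟨hLM, fun i hi => absurd hi i.not_lt_zero⟩
  | succ n ih =>
    obtain ⟨s, L, hc, hs⟩ := ih (fun m hm => he m (by omega)) (fun m hm => ha m (by omega))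
      (fun m hm => hrec m (by omega))
    obtain ⟨K, w, hcK, hLK, hw⟩ := (hs n le_rfl).2.exists_factorization_of_recurrence
      (hc n (by omega)) (hc (n + 1) le_rfl) (hs n le_rfl).1 (he n n.lt_succ_self)
      (ha n n.lt_succ_self) (hrec n n.lt_succ_self)
    refine ⟨Function.update s (n + 2) w, Function.update L (n + 2) K, fun r hr => ?_,
      fun r hr => ?_⟩
    · rcases hr.lt_or_eq with hr | rfl
      · simpa [Function.update_of_ne (show r ≠ n + 2 by omega)] using hc r (by omega)
      · simpa using hcK
    · rcases hr.lt_or_eq with hr | rfl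
      · simpa [Function.update_of_ne (show r ≠ n + 2 by omega),
          Function.update_of_ne (show r + 1 ≠ n + 2 by omega)] using hs r (by omega)
      · simpa using ⟨hLK, hw⟩

theorem heun_coeff_roots_interlace_general
    (N : ℕ) (γ1 γ2 γ3 t1 t2 t3 α β : ℝ)
    (hγ3 : 0 < γ3)
    (hsum : 1 < γ1 + γ2 + γ3 + N)
    (hprod : (t1 - t3) * (t2 - t3) < 0)
    (hαβ : ({α, β} : Set ℝ) = ({-(N : ℝ), γ1 + γ2 + γ3 + (N : ℝ) - 1} : Set ℝ))
    (c : ℕ → Polynomial ℝ)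
    (hc0 : c 0 = 1)
    (hc1 : Polynomial.C ((t1 - t3) * (t2 - t3) * γ3) * c 1 = Polynomial.X * c 0)
    (hrec : ∀ m : ℕ,
      Polynomial.C ((t1 - t3) * (t2 - t3) * ((m : ℝ) + 2) * ((m : ℝ) + 1 + γ3)) * c (m + 2)
        = Polynomial.C (-(((m : ℝ) + α) * ((m : ℝ) + β))) * c m
          + (Polynomial.C (((m : ℝ) + 1) * (((m : ℝ) + γ3) * (t1 + t2 - 2 * t3)
                + (t2 - t3) * γ1 + (t1 - t3) * γ2)) + Polynomial.X) * c (m + 1))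
    : ∃ s : ℕ → ℕ → ℝ,
      (∀ r : ℕ, 1 ≤ r → r ≤ N + 1 →
        (∀ i j : ℕ, 1 ≤ i → i < j → j ≤ r → s r i < s r j) ∧
        (∀ i : ℕ, 1 ≤ i → i ≤ r → (c r).eval (s r i) = 0) ∧
        (∀ x : ℝ, (c r).eval x = 0 → ∃ i : ℕ, 1 ≤ i ∧ i ≤ r ∧ x = s r i)) ∧
      (∀ r : ℕ, 2 ≤ r → r ≤ N + 1 → ∀ i : ℕ, 1 ≤ i → i ≤ r - 1 →
        s r i < s (r - 1) i ∧ s (r - 1) i < s r (i + 1)) := by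
  have hE₀ : (t1 - t3) * (t2 - t3) * γ3 < 0 := mul_neg_of_neg_of_pos hprod hγ3
  have hc1' : c 1 = C ((t1 - t3) * (t2 - t3) * γ3)⁻¹ * (X - C 0) := by
    rw [map_zero, sub_zero, ← mul_one X, ← hc0, ← hc1, ← mul_assoc, ← C_mul,
      inv_mul_cancel₀ hE₀.ne, C_1, one_mul]
  have hE : ∀ m : ℕ, (t1 - t3) * (t2 - t3) * ((m : ℝ) + 2) * ((m : ℝ) + 1 + γ3) < 0 := fun m =>
    mul_neg_of_neg_of_pos (mul_neg_of_neg_of_pos hprod (by positivity)) (by positivity)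
  have hD : ∀ m < N, 0 < -(((m : ℝ) + α) * ((m : ℝ) + β)) := fun m hm => by
    rw [mul_add_eq_of_pair_eq hαβ, neg_pos]
    have hmN : (m : ℝ) < N := by exact_mod_cast hm
    exact mul_neg_of_neg_of_pos (by linarith) (by linarith [m.cast_nonneg (α := ℝ)])
  obtain ⟨s, L, hc, hs⟩ := exists_interlacing_roots_of_recurrence c _ _ _ (hc0.trans C_1.symm) hc1'
    (by rw [one_mul]; exact inv_lt_zero.2 hE₀) (fun m _ => hE m) hD (fun m _ => hrec m)
  refine ⟨fun r i => s r (i - 1), fun r hr1 hrN => ?_, fun r hr2 hrN i hi1 hi => ?_⟩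
  · obtain ⟨k, rfl⟩ : ∃ k, r = k + 1 := ⟨r - 1, by omega⟩
    obtain ⟨hsign, hint⟩ := hs k (by omega)
    have hL : L (k + 1) ≠ 0 := by rintro h; simp [h] at hsign
    rw [hc (k + 1) hrN]
    refine ⟨fun i j hi hij hj => hint.strictMonoOn (Set.mem_Iic.2 (by omega))
      (Set.mem_Iic.2 (by omega)) (by omega), fun i hi1 hi => ?_, fun x hx => ?_⟩
    · exact (eval_C_mul_prod_X_sub_C_eq_zero_iff hL).2 ⟨i - 1, by omega, rfl⟩
    · obtain ⟨i, hi, rfl⟩ := (eval_C_mul_prod_X_sub_C_eq_zero_iff hL).1 hx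
      exact ⟨i + 1, by omega, by omega, rfl⟩
  · obtain ⟨k, rfl⟩ : ∃ k, r = k + 1 := ⟨r - 1, by omega⟩
    have h := (hs k (by omega)).2 (i - 1) (by omega)
    rwa [Nat.sub_add_cancel hi1] at h

/-- For every `1 ≤ r ≤ N+1`, the polynomial `c r` has exactly `r`
distinct real roots `s r 1 < s r 2 < ⋯ < s r r`, and the roots of consecutive
polynomials strictly interlace: `s r i < s (r-1) i < s r (i+1)`. -/
theorem heun_coeff_roots_interlace
    (N : ℕ) (γ1 γ2 γ3 t1 t2 t3 α β : ℝ)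
    (ht12 : t1 ≠ t2) (ht13 : t1 ≠ t3) (ht23 : t2 ≠ t3)
    (hγ3 : 0 < γ3)
    (hsum : 1 < γ1 + γ2 + γ3 + N)
    (hprod : (t1 - t3) * (t2 - t3) < 0)
    (hαβ : ({α, β} : Set ℝ) = ({-(N : ℝ), γ1 + γ2 + γ3 + (N : ℝ) - 1} : Set ℝ))
    (c : ℕ → Polynomial ℝ)
    (hc0 : c 0 = 1)
    (hc1 : Polynomial.C ((t1 - t3) * (t2 - t3) * γ3) * c 1 = Polynomial.X * c 0)
    (hrec : ∀ m : ℕ,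
      Polynomial.C ((t1 - t3) * (t2 - t3) * ((m : ℝ) + 2) * ((m : ℝ) + 1 + γ3)) * c (m + 2)
        = Polynomial.C (-(((m : ℝ) + α) * ((m : ℝ) + β))) * c m
          + (Polynomial.C (((m : ℝ) + 1) * (((m : ℝ) + γ3) * (t1 + t2 - 2 * t3)
                + (t2 - t3) * γ1 + (t1 - t3) * γ2)) + Polynomial.X) * c (m + 1))
    : ∃ s : ℕ → ℕ → ℝ,
      (∀ r : ℕ, 1 ≤ r → r ≤ N + 1 →
        (∀ i j : ℕ, 1 ≤ i → i < j → j ≤ r → s r i < s r j) ∧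
        (∀ i : ℕ, 1 ≤ i → i ≤ r → (c r).eval (s r i) = 0) ∧
        (∀ x : ℝ, (c r).eval x = 0 → ∃ i : ℕ, 1 ≤ i ∧ i ≤ r ∧ x = s r i)) ∧
      (∀ r : ℕ, 2 ≤ r → r ≤ N + 1 → ∀ i : ℕ, 1 ≤ i → i ≤ r - 1 →
        s r i < s (r - 1) i ∧ s (r - 1) i < s r (i + 1)) :=
  heun_coeff_roots_interlace_general N γ1 γ2 γ3 t1 t2 t3 α β hγ3 hsum hprod hαβ c hc0 hc1 hrec
end

section
/- Assume l0, l1, l2, l3 ∈ ℝ, ã_i ∈ {−l_i/2, (l_i+1)/2} for i = 0,1,2,3, N := −(ã0+ã1+ã2+ã3) ∈ ℤ_{≥0}, 2ã3 + 1/2 > 0, and −ã0 + ã1 + ã2 + ã3 + 1/2 > 0. Let e1 > e3 > e2 be real numbers with e1+e2+e3 = 0. Then the polynomial E ↦ c_{N+1}(E), which has degree N+1, has all of its N+1 roots real and unequal. -/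
/-!
Dividing the recurrence by its leading coefficient `(e1 - e3)(e2 - e3)(k + 1)(k + γ3) < 0` puts
it in the form `p (k + 1) = (a k X + b k) p k + g k p (k - 1)` with `a k > 0`, and `g k < 0` for
`0 < k ≤ N` because there `k - 1 + α = k - 1 - N < 0 < k - 1 + β`. As for orthogonal
polynomials, two positivity invariants then propagate along the recurrence: the Wronskian of
`p k, p (k + 1)` is positive on `ℝ`, so real roots of `p (k + 1)` are simple, and
`Im z * Im (p (k + 1) (z) * conj (p k (z))) > 0` whenever `Im z ≠ 0`, so all complex roots are
real.
-/

open Polynomial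

namespace Polynomial

theorem nodup_roots_of_eval_derivative_ne_zero {R : Type*} [CommRing R] [IsDomain R] {p : R[X]}
    (h : ∀ x, p.IsRoot x → (derivative p).eval x ≠ 0) : p.roots.Nodup := by
  classical
  rcases eq_or_ne p 0 with rfl | hp
  · simp
  refine Multiset.nodup_iff_count_le_one.mpr fun x => ?_
  rw [count_roots]
  by_contra! hx
  obtain ⟨hroot, hderiv⟩ := (one_lt_rootMultiplicity_iff_isRoot hp).mp hx
  exact h x hroot hderiv

theorem splits_of_forall_aeval_eq_zero_im_eq_zero {p : ℝ[X]}
    (h : ∀ z : ℂ, aeval z p = 0 → z.im = 0) : p.Splits :=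
  Splits.of_splits_map_of_injective (algebraMap ℝ ℂ).injective (IsAlgClosed.splits _)
    fun z hz => ⟨z.re, Complex.ext rfl <| by
      simp [h z (by simpa [aeval_def, eval_map] using isRoot_of_mem_roots hz)]⟩

end Polynomial

/-- `p 0, …, p n` satisfy `p (k + 1) = (a k X + b k) p k + g k p (k - 1)`, with `p (-1) = 0`. -/
structure ThreeTermRecurrence (n : ℕ) (p : ℕ → ℝ[X]) (a b g : ℕ → ℝ) : Prop where
  zero : p 0 = 1
  one : p 1 = C (a 0) * X + C (b 0)
  succ_succ : ∀ k, k + 2 ≤ n →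
    p (k + 2) = (C (a (k + 1)) * X + C (b (k + 1))) * p (k + 1) + C (g (k + 1)) * p k

namespace ThreeTermRecurrence

variable {n m : ℕ} {p : ℕ → ℝ[X]} {a b g : ℕ → ℝ}

theorem of_C_mul {d α β γ : ℕ → ℝ} (hd : ∀ k, d k ≠ 0) (h0 : p 0 = 1)
    (h1 : C (d 0) * p 1 = C (α 0) * X + C (β 0))
    (hrec : ∀ k, k + 2 ≤ n → C (d (k + 1)) * p (k + 2) =
      (C (α (k + 1)) * X + C (β (k + 1))) * p (k + 1) + C (γ (k + 1)) * p k) :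
    ThreeTermRecurrence n p (α / d) (β / d) (γ / d) := by
  have hdiv {k : ℕ} {q r : ℝ[X]} (h : C (d k) * q = r) : q = C (d k)⁻¹ * r := by
    rw [← h, ← mul_assoc, ← C_mul, inv_mul_cancel₀ (hd k), C_1, one_mul]
  refine ⟨h0, ?_, fun k hk => ?_⟩
  · rw [hdiv h1]
    simp only [Pi.div_apply, div_eq_inv_mul, C_mul]
    ring
  · rw [hdiv (hrec k hk)]
    simp only [Pi.div_apply, div_eq_inv_mul, C_mul]
    ring

theorem degree_eq (h : ThreeTermRecurrence n p a b g) (ha : ∀ k < n, a k ≠ 0) :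
    ∀ k ≤ n, (p k).degree = k := by
  intro k
  induction k using Nat.twoStepInduction with
  | zero => simp [h.zero]
  | one => intro hn; rw [h.one, degree_linear (ha 0 (by omega))]; rfl
  | more k ih₀ ih₁ =>
    intro hk
    have hlead : ((C (a (k + 1)) * X + C (b (k + 1))) * p (k + 1)).degree =
        ((k + 2 : ℕ) : WithBot ℕ) := by
      rw [degree_mul, degree_linear (ha _ (by omega)), ih₁ (by omega)]
      norm_cast
      omega
    have hrest : (C (g (k + 1)) * p k).degree < ((k + 2 : ℕ) : WithBot ℕ) :=
      calc (C (g (k + 1)) * p k).degree ≤ (p k).degree :=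
            (degree_mul_le_of_le degree_C_le le_rfl).trans_eq (zero_add _)
        _ < ((k + 2 : ℕ) : WithBot ℕ) := by rw [ih₀ (by omega)]; exact_mod_cast (by omega)
    rw [h.succ_succ k hk, degree_add_eq_left_of_degree_lt (hlead ▸ hrest), hlead]

theorem wronskian_succ_succ (h : ThreeTermRecurrence n p a b g) {k : ℕ} (hk : k + 2 ≤ n) :
    wronskian (p (k + 1)) (p (k + 2)) =
      C (a (k + 1)) * p (k + 1) ^ 2 - C (g (k + 1)) * wronskian (p k) (p (k + 1)) := by
  rw [h.succ_succ k hk]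
  simp only [wronskian, derivative_add, derivative_mul, derivative_C, derivative_X]
  ring

theorem eval_wronskian_pos (h : ThreeTermRecurrence n p a b g) (ha : ∀ k < n, 0 < a k)
    (hg : ∀ k < n, 0 < k → g k < 0) (x : ℝ) :
    ∀ k, k + 1 ≤ n → 0 < (wronskian (p k) (p (k + 1))).eval x := by
  intro k
  induction k with
  | zero => intro hn; simpa [h.zero, h.one, wronskian] using ha 0 (by omega)
  | succ k ih =>
    intro hk
    have := ih (by omega)
    rw [h.wronskian_succ_succ hk, eval_sub, eval_mul, eval_mul, eval_C, eval_C, eval_pow]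
    nlinarith [ha (k + 1) (by omega), hg (k + 1) (by omega) (by omega),
      sq_nonneg ((p (k + 1)).eval x)]

theorem im_mul_im_aeval_mul_conj_pos (h : ThreeTermRecurrence n p a b g)
    (ha : ∀ k < n, 0 < a k) (hg : ∀ k < n, 0 < k → g k < 0) {z : ℂ} (hz : z.im ≠ 0) :
    ∀ k, k + 1 ≤ n →
      0 < z.im * (aeval z (p (k + 1)) * starRingEnd ℂ (aeval z (p k))).im := by
  intro k
  induction k with
  | zero =>
    intro hn
    simpa [h.zero, h.one, ← mul_assoc, mul_comm z.im] using
      mul_pos (ha 0 (by omega)) (mul_self_pos.mpr hz)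
  | succ k ih =>
    intro hk
    set u := aeval z (p k)
    set v := aeval z (p (k + 1))
    have hw : aeval z (p (k + 2)) = (a (k + 1) * z + b (k + 1)) * v + g (k + 1) * u := by
      rw [h.succ_succ k hk]
      simp [u, v]
    have key : z.im * (aeval z (p (k + 2)) * starRingEnd ℂ v).im =
        a (k + 1) * z.im ^ 2 * Complex.normSq v
          - g (k + 1) * (z.im * (v * starRingEnd ℂ u).im) := by
      rw [hw]
      simp only [Complex.mul_im, Complex.mul_re, Complex.add_im, Complex.add_re,
        Complex.ofReal_re, Complex.ofReal_im, Complex.conj_re, Complex.conj_im,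
        Complex.normSq_apply]
      ring
    rw [key]
    have := mul_pos (neg_pos.mpr (hg (k + 1) (by omega) (by omega))) (ih (by omega))
    nlinarith [mul_nonneg (mul_nonneg (ha (k + 1) (by omega)).le (sq_nonneg z.im))
      (Complex.normSq_nonneg v)]

theorem im_eq_zero_of_aeval_eq_zero (h : ThreeTermRecurrence n p a b g)
    (ha : ∀ k < n, 0 < a k) (hg : ∀ k < n, 0 < k → g k < 0) (hm : m + 1 ≤ n) {z : ℂ}
    (hz : aeval z (p (m + 1)) = 0) :
    z.im = 0 := by
  by_contra hne
  simpa [hz] using h.im_mul_im_aeval_mul_conj_pos ha hg hne m hm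

theorem eval_derivative_ne_zero_of_isRoot (h : ThreeTermRecurrence n p a b g)
    (ha : ∀ k < n, 0 < a k) (hg : ∀ k < n, 0 < k → g k < 0) (hm : m + 1 ≤ n) {x : ℝ}
    (hx : (p (m + 1)).IsRoot x) : (derivative (p (m + 1))).eval x ≠ 0 := by
  intro h0
  simpa [wronskian, hx.eq_zero, h0] using h.eval_wronskian_pos ha hg x m hm

theorem card_roots_toFinset (h : ThreeTermRecurrence n p a b g) (ha : ∀ k < n, 0 < a k)
    (hg : ∀ k < n, 0 < k → g k < 0) {k : ℕ} (hk : k ≤ n) :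
    (p k).roots.toFinset.card = k := by
  obtain _ | m := k
  · simp [h.zero]
  rw [Multiset.toFinset_card_of_nodup (nodup_roots_of_eval_derivative_ne_zero fun x hx =>
      h.eval_derivative_ne_zero_of_isRoot ha hg hk hx),
    splits_iff_card_roots.mp (splits_of_forall_aeval_eq_zero_im_eq_zero fun z hz =>
      h.im_eq_zero_of_aeval_eq_zero ha hg hk hz)]
  exact natDegree_eq_of_degree_eq_some (h.degree_eq (fun k hk => (ha k hk).ne') _ hk)

theorem exists_finset_isRoot_iff (h : ThreeTermRecurrence n p a b g) (ha : ∀ k < n, 0 < a k)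
    (hg : ∀ k < n, 0 < k → g k < 0) {k : ℕ} (hk : k ≤ n) :
    ∃ S : Finset ℝ, S.card = k ∧ ∀ x, x ∈ S ↔ (p k).IsRoot x := by
  have hne : p k ≠ 0 := fun h0 => by
    simpa [h0] using h.degree_eq (fun k hk => (ha k hk).ne') k hk
  exact ⟨_, h.card_roots_toFinset ha hg hk, fun x => by
    rw [Multiset.mem_toFinset, mem_roots hne]⟩

end ThreeTermRecurrence

theorem elliptic_heun_real_distinct_roots_general
    (a0 a1 a2 a3 : ℝ)
    (N : ℕ) (hN : (N : ℝ) = -(a0 + a1 + a2 + a3))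
    (hγ3 : 0 < 2 * a3 + 1 / 2)
    (hβ : 0 < -a0 + a1 + a2 + a3 + 1 / 2)
    (e1 e2 e3 : ℝ) (h13 : e3 < e1) (h32 : e2 < e3)
    (qE : Polynomial ℝ)
    (hqE : qE = Polynomial.C (e1 * (a2 + a3) ^ 2 + e2 * (a1 + a3) ^ 2 + e3 * (a1 + a2) ^ 2
        - e3 * ((a0 + a1 + a2 + a3) * (-a0 + 1 / 2 + a1 + a2 + a3)))
      - Polynomial.C (1 / 4 : ℝ) * Polynomial.X)
    (c : ℕ → Polynomial ℝ)
    (hc0 : c 0 = 1)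
    (hc1 : Polynomial.C ((e1 - e3) * (e2 - e3) * (2 * a3 + 1 / 2)) * c 1 = qE)
    (hrec : ∀ m : ℕ,
      Polynomial.C ((e1 - e3) * (e2 - e3) * ((m : ℝ) + 2) * ((m : ℝ) + 1 + (2 * a3 + 1 / 2)))
          * c (m + 2)
        = Polynomial.C (-(((m : ℝ) + (a0 + a1 + a2 + a3))
              * ((m : ℝ) + (-a0 + 1 / 2 + a1 + a2 + a3)))) * c m
          + (Polynomial.C (((m : ℝ) + 1) * (((m : ℝ) + (2 * a3 + 1 / 2)) * (e1 + e2 - 2 * e3)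
                + (e2 - e3) * (2 * a1 + 1 / 2) + (e1 - e3) * (2 * a2 + 1 / 2)))
              + qE) * c (m + 1)) :
    (c (N + 1)).degree = ((N + 1 : ℕ) : WithBot ℕ) ∧
      ∃ S : Finset ℝ, S.card = N + 1 ∧ (∀ E ∈ S, (c (N + 1)).IsRoot E) ∧
        ∀ E : ℝ, (c (N + 1)).IsRoot E → E ∈ S := by
  set γ3 := 2 * a3 + 1 / 2
  set q0 := e1 * (a2 + a3) ^ 2 + e2 * (a1 + a3) ^ 2 + e3 * (a1 + a2) ^ 2
    - e3 * ((a0 + a1 + a2 + a3) * (-a0 + 1 / 2 + a1 + a2 + a3))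
  -- `hc1`, `hrec`: `C (d k) * c (k + 1) = (C (s k) * X + C (t k)) * c k + C (r k) * c (k - 1)`
  set s : ℕ → ℝ := fun _ => -(1 / 4)
  set d : ℕ → ℝ := fun k => (e1 - e3) * (e2 - e3) * (k + 1) * (k + γ3)
  set t : ℕ → ℝ := fun k => k * ((k - 1 + γ3) * (e1 + e2 - 2 * e3)
    + (e2 - e3) * (2 * a1 + 1 / 2) + (e1 - e3) * (2 * a2 + 1 / 2)) + q0
  set r : ℕ → ℝ := fun k =>
    -((k - 1 + (a0 + a1 + a2 + a3)) * (k - 1 + (-a0 + 1 / 2 + a1 + a2 + a3)))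
  have hd (k : ℕ) : d k < 0 := mul_neg_of_neg_of_pos (mul_neg_of_neg_of_pos
    (mul_neg_of_pos_of_neg (by linarith) (by linarith)) (by positivity)) (by positivity)
  have hc : ThreeTermRecurrence (N + 1) c (s / d) (t / d) (r / d) := by
    refine .of_C_mul (fun k => (hd k).ne) hc0 ?_ fun m _ => ?_
    · convert hc1 using 2 <;> simp [s, d, t, hqE, sub_eq_add_neg, add_comm]
    · linear_combination (norm := skip) hrec m
      simp only [s, d, t, r, hqE, map_add, map_mul, map_sub, map_neg, map_natCast, map_one,
        map_ofNat, Nat.cast_add, Nat.cast_one]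
      ring
  have ha (k : ℕ) (_ : k < N + 1) : 0 < (s / d) k :=
    div_pos_of_neg_of_neg (by norm_num [s]) (hd k)
  have hg (k : ℕ) (hk : k < N + 1) (hk0 : 0 < k) : (r / d) k < 0 := by
    have : (k : ℝ) ≤ N := by exact_mod_cast Nat.lt_succ_iff.mp hk
    have : (1 : ℝ) ≤ k := by exact_mod_cast hk0
    exact div_neg_of_pos_of_neg (by simp only [r]; nlinarith) (hd k)
  obtain ⟨S, hS, hroots⟩ := hc.exists_finset_isRoot_iff ha hg le_rfl
  exact ⟨hc.degree_eq (fun k hk => (ha k hk).ne') _ le_rfl, S, hS, fun E => (hroots E).1,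
    fun E => (hroots E).2⟩

/-- For the elliptic form of Heun's equation with `ã_i ∈ {−l_i/2, (l_i+1)/2}`,
`N = −(ã0+ã1+ã2+ã3) ∈ ℤ_{≥0}`, `2ã3 + 1/2 > 0`, `−ã0+ã1+ã2+ã3+1/2 > 0`, and half-period
values `e1 > e3 > e2` with `e1+e2+e3 = 0`, the polynomial `c (N+1)` (of degree `N+1` in `E`)
has all of its `N+1` roots real and unequal. -/
theorem elliptic_heun_real_distinct_roots
    (l0 l1 l2 l3 a0 a1 a2 a3 : ℝ)
    (ha0 : a0 = -l0 / 2 ∨ a0 = (l0 + 1) / 2)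
    (ha1 : a1 = -l1 / 2 ∨ a1 = (l1 + 1) / 2)
    (ha2 : a2 = -l2 / 2 ∨ a2 = (l2 + 1) / 2)
    (ha3 : a3 = -l3 / 2 ∨ a3 = (l3 + 1) / 2)
    (N : ℕ) (hN : (N : ℝ) = -(a0 + a1 + a2 + a3))
    (hγ3 : 0 < 2 * a3 + 1 / 2)
    (hβ : 0 < -a0 + a1 + a2 + a3 + 1 / 2)
    (e1 e2 e3 : ℝ) (h13 : e3 < e1) (h32 : e2 < e3) (hsum : e1 + e2 + e3 = 0)
    (qE : Polynomial ℝ)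
    (hqE : qE = Polynomial.C (e1 * (a2 + a3) ^ 2 + e2 * (a1 + a3) ^ 2 + e3 * (a1 + a2) ^ 2
        - e3 * ((a0 + a1 + a2 + a3) * (-a0 + 1 / 2 + a1 + a2 + a3)))
      - Polynomial.C (1 / 4 : ℝ) * Polynomial.X)
    (c : ℕ → Polynomial ℝ)
    (hc0 : c 0 = 1)
    (hc1 : Polynomial.C ((e1 - e3) * (e2 - e3) * (2 * a3 + 1 / 2)) * c 1 = qE)
    (hrec : ∀ m : ℕ,
      Polynomial.C ((e1 - e3) * (e2 - e3) * ((m : ℝ) + 2) * ((m : ℝ) + 1 + (2 * a3 + 1 / 2)))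
          * c (m + 2)
        = Polynomial.C (-(((m : ℝ) + (a0 + a1 + a2 + a3))
              * ((m : ℝ) + (-a0 + 1 / 2 + a1 + a2 + a3)))) * c m
          + (Polynomial.C (((m : ℝ) + 1) * (((m : ℝ) + (2 * a3 + 1 / 2)) * (e1 + e2 - 2 * e3)
                + (e2 - e3) * (2 * a1 + 1 / 2) + (e1 - e3) * (2 * a2 + 1 / 2)))
              + qE) * c (m + 1)) :
    (c (N + 1)).degree = ((N + 1 : ℕ) : WithBot ℕ) ∧
      ∃ S : Finset ℝ, S.card = N + 1 ∧ (∀ E ∈ S, (c (N + 1)).IsRoot E) ∧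
        ∀ E : ℝ, (c (N + 1)).IsRoot E → E ∈ S :=
  elliptic_heun_real_distinct_roots_general a0 a1 a2 a3 N hN hγ3 hβ e1 e2 e3 h13 h32 qE hqE c hc0
    hc1 hrec
end

section
/- Let g2, g3, x be real numbers with g2 > 0, g2³ > 27·g3², g3·x ≥ 0 and 4x² ≥ g2. Then φ(x) = 432·g2·x⁴ + 864·g3·x³ − 72·g2²·x² − 216·g2·g3·x − g2³ − 108·g3² satisfies φ(x) ≥ 8g2³ − 108g3² > 0. -/
/-- If `g2 > 0`, `g2³ > 27g3²`, `g3·x ≥ 0` and `4x² ≥ g2`, then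
`φ(x) = 432g2x⁴ + 864g3x³ − 72g2²x² − 216g2g3x − g2³ − 108g3² ≥ 8g2³ − 108g3² > 0`. -/
theorem phi_lower_bound
    (g2 g3 x : ℝ)
    (hg2 : 0 < g2) (hdisc : 27 * g3 ^ 2 < g2 ^ 3)
    (hg3x : 0 ≤ g3 * x) (hx : g2 ≤ 4 * x ^ 2) :
    8 * g2 ^ 3 - 108 * g3 ^ 2 ≤
        432 * g2 * x ^ 4 + 864 * g3 * x ^ 3 - 72 * g2 ^ 2 * x ^ 2
          - 216 * g2 * g3 * x - g2 ^ 3 - 108 * g3 ^ 2 ∧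
      0 < 8 * g2 ^ 3 - 108 * g3 ^ 2 := by
  constructor
  · nlinarith [mul_nonneg hg3x (by linarith : (0:ℝ) ≤ 4 * x ^ 2 - g2),
      mul_nonneg hg2.le (sq_nonneg (4 * x ^ 2 - g2)),
      mul_nonneg (mul_nonneg hg2.le (by linarith : (0:ℝ) ≤ 4 * x ^ 2 - g2)) (by linarith : (0:ℝ) ≤ 4 * x ^ 2 - g2)]
  · nlinarith [sq_nonneg g3]
end

section
/- Let e1 > e3 > e2 be real numbers with e1 + e2 + e3 = 0, and set g2 = −4(e1e2 + e2e3 + e3e1), g3 = 4e1e2e3 and φ(x) = 432·g2·x⁴ + 864·g3·x³ − 72·g2²·x² − 216·g2·g3·x − g2³ − 108·g3². Then φ(e1) > 0, φ(e2) > 0 and φ(e3) < 0. -/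
/-- For real `e1 > e3 > e2` with `e1 + e2 + e3 = 0`,
`g2 = −4(e1e2 + e2e3 + e3e1)`, `g3 = 4e1e2e3` and
`φ(x) = 432g2x⁴ + 864g3x³ − 72g2²x² − 216g2g3x − g2³ − 108g3²`, one has
`φ(e1) > 0`, `φ(e2) > 0` and `φ(e3) < 0`. -/
theorem phi_signs_at_half_periods
    (e1 e2 e3 : ℝ) (h13 : e3 < e1) (h32 : e2 < e3) (hsum : e1 + e2 + e3 = 0)
    (g2 g3 : ℝ)
    (hg2 : g2 = -4 * (e1 * e2 + e2 * e3 + e3 * e1))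
    (hg3 : g3 = 4 * (e1 * e2 * e3))
    (φ : ℝ → ℝ)
    (hφ : ∀ x : ℝ, φ x = 432 * g2 * x ^ 4 + 864 * g3 * x ^ 3 - 72 * g2 ^ 2 * x ^ 2
        - 216 * g2 * g3 * x - g2 ^ 3 - 108 * g3 ^ 2) :
    0 < φ e1 ∧ 0 < φ e2 ∧ φ e3 < 0 := by
  have he1 : e1 = -e2 - e3 := by linarith
  subst he1
  have h12 : (0:ℝ) < (-e2 - e3) - e2 := by linarith
  have h13' : (0:ℝ) < (-e2 - e3) - e3 := by linarith
  have h32' : (0:ℝ) < e3 - e2 := by linarith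
  refine ⟨?_, ?_, ?_⟩
  · have : φ (-e2 - e3) = 64 * ((-e2 - e3) - e2) ^ 3 * ((-e2 - e3) - e3) ^ 3 := by
      rw [hφ, hg2, hg3]; ring
    rw [this]; positivity
  · have : φ e2 = 64 * ((-e2 - e3) - e2) ^ 3 * (e3 - e2) ^ 3 := by
      rw [hφ, hg2, hg3]; ring
    rw [this]; positivity
  · have : φ e3 = -(64 * ((-e2 - e3) - e3) ^ 3 * (e3 - e2) ^ 3) := by
      rw [hφ, hg2, hg3]; ring
    rw [this]
    have : 0 < 64 * ((-e2 - e3) - e3) ^ 3 * (e3 - e2) ^ 3 := by positivity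
    linarith
end

section
/- Let g2, g3 ∈ ℝ with g2³ − 27g3² > 0, and let e1 > e3 > e2 denote the three (necessarily real and distinct) roots of 4t³ − g2·t − g3 = 0. Then for every real x with x ≥ e1 or x ≤ e2, the cubic equation X³ − 3x·X² + (g2/4)·X + (2g3 + x·g2)/4 = 0 has three distinct real roots X; equivalently, φ(x) = 432·g2·x⁴ + 864·g3·x³ − 72·g2²·x² − 216·g2·g3·x − g2³ − 108·g3² > 0. -/
set_option maxHeartbeats 800000

private lemma amgm_strict (a c b : ℝ) (ha : 0 ≤ a) (hac : a < c) (hcb : c < b) :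
    0 < 4*(a*b+a*c+b*c)^3 - 108*(a*b*c)^2 := by
  have hc : 0 < c := lt_of_le_of_lt ha hac
  have hb : 0 < b := lt_trans hc hcb
  have hS : 0 < a*b + a*c + b*c := by
    nlinarith [mul_pos hb hc, mul_nonneg ha hb.le, mul_nonneg ha hc.le]
  have hpr : 0 < (a*b - b*c)^2 := by
    have : a*b - b*c ≠ 0 := by nlinarith
    positivity
  nlinarith [mul_pos hS hpr, mul_nonneg hS.le (sq_nonneg (a*b-a*c)),
    mul_nonneg hS.le (sq_nonneg (a*c-b*c)),
    mul_nonneg (mul_nonneg ha hb.le) (sq_nonneg (a*c-b*c)),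
    mul_nonneg (mul_nonneg ha hc.le) (sq_nonneg (a*b-b*c)),
    mul_nonneg (mul_pos hb hc).le (sq_nonneg (a*b-a*c))]

/-- **Lemma 5.3 / Theorem 5.2.** Let `g2³ − 27g3² > 0` and let `e1 > e3 > e2`
be the three real roots of `4t³ − g2t − g3 = 0`. For every real `x` with `x ≥ e1` or `x ≤ e2`,
the cubic `X³ − 3xX² + (g2/4)X + (2g3 + xg2)/4 = 0` has three distinct real roots;
equivalently `φ(x) = 432g2x⁴ + 864g3x³ − 72g2²x² − 216g2g3x − g2³ − 108g3² > 0`. -/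
theorem cubic_three_distinct_real_roots
    (g2 g3 e1 e2 e3 : ℝ)
    (hdisc : 0 < g2 ^ 3 - 27 * g3 ^ 2)
    (he1 : 4 * e1 ^ 3 - g2 * e1 - g3 = 0)
    (he2 : 4 * e2 ^ 3 - g2 * e2 - g3 = 0)
    (he3 : 4 * e3 ^ 3 - g2 * e3 - g3 = 0)
    (h13 : e3 < e1) (h32 : e2 < e3)
    (x : ℝ) (hx : e1 ≤ x ∨ x ≤ e2) :
    (∃ X1 X2 X3 : ℝ, X1 < X2 ∧ X2 < X3 ∧
      X1 ^ 3 - 3 * x * X1 ^ 2 + (g2 / 4) * X1 + (2 * g3 + x * g2) / 4 = 0 ∧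
      X2 ^ 3 - 3 * x * X2 ^ 2 + (g2 / 4) * X2 + (2 * g3 + x * g2) / 4 = 0 ∧
      X3 ^ 3 - 3 * x * X3 ^ 2 + (g2 / 4) * X3 + (2 * g3 + x * g2) / 4 = 0) ∧
    0 < 432 * g2 * x ^ 4 + 864 * g3 * x ^ 3 - 72 * g2 ^ 2 * x ^ 2
        - 216 * g2 * g3 * x - g2 ^ 3 - 108 * g3 ^ 2 := by
  -- symmetric function facts
  have hne13 : e1 - e3 ≠ 0 := sub_ne_zero.mpr (ne_of_gt h13)
  have hne23 : e2 - e3 ≠ 0 := sub_ne_zero.mpr (ne_of_lt h32)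
  have hne12 : e1 - e2 ≠ 0 := sub_ne_zero.mpr (ne_of_gt (lt_trans h32 h13))
  have h13q : 4*(e1^2+e1*e3+e3^2) - g2 = 0 := by
    have hf : (e1 - e3) * (4*(e1^2+e1*e3+e3^2) - g2) = 0 := by linear_combination he1 - he3
    rcases mul_eq_zero.mp hf with h | h
    · exact absurd h hne13
    · exact h
  have h23q : 4*(e2^2+e2*e3+e3^2) - g2 = 0 := by
    have hf : (e2 - e3) * (4*(e2^2+e2*e3+e3^2) - g2) = 0 := by linear_combination he2 - he3
    rcases mul_eq_zero.mp hf with h | h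
    · exact absurd h hne23
    · exact h
  have hsum0 : e1 + e2 + e3 = 0 := by
    have hf : (e1 - e2) * (e1 + e2 + e3) = 0 := by linear_combination (h13q - h23q)/4
    rcases mul_eq_zero.mp hf with h | h
    · exact absurd h hne12
    · exact h
  have hg2' : g2 = -4*(e1*e2+e1*e3+e2*e3) := by
    linear_combination -h13q + 4*(e1+e3)*hsum0
  have hg3' : g3 = 4*(e1*e2*e3) := by
    linear_combination -he1 - e1*hg2' + 4*e1^2*hsum0
  obtain ⟨q, hqdef⟩ : ∃ q : ℝ, q = 3*x^2 - g2/4 := ⟨_, rfl⟩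
  obtain ⟨r, hrdef⟩ : ∃ r : ℝ, r = (4*x^3 - g2*x - g3)/2 := ⟨_, rfl⟩
  have hq2 : q = (x-e1)*(x-e2)+(x-e1)*(x-e3)+(x-e2)*(x-e3) := by
    rw [hqdef]; linear_combination (-1/4)*hg2' + 2*x*hsum0
  have hr2 : r = 2*((x-e1)*(x-e2)*(x-e3)) := by
    rw [hrdef]; linear_combination (-x/2)*hg2' + (-1/2)*hg3' + 2*x^2*hsum0
  -- the key inequalities: q > 0 and 4q³ - 27r² > 0
  have hmain : 0 < q ∧ 0 < 4*q^3 - 27*r^2 := by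
    rcases hx with hx | hx
    · have ha : 0 ≤ x - e1 := sub_nonneg.mpr hx
      have hac : x - e1 < x - e3 := by linarith
      have hcb : x - e3 < x - e2 := by linarith
      have h := amgm_strict (x - e1) (x - e3) (x - e2) ha hac hcb
      have hc : 0 < x - e3 := lt_of_le_of_lt ha hac
      have hb : 0 < x - e2 := lt_trans hc hcb
      constructor
      · rw [hq2]
        nlinarith [mul_pos hb hc, mul_nonneg ha hb.le, mul_nonneg ha hc.le]
      · rw [hq2, hr2]
        have heq : 4*((x-e1)*(x-e2)+(x-e1)*(x-e3)+(x-e2)*(x-e3))^3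
            - 27*(2*((x-e1)*(x-e2)*(x-e3)))^2
            = 4*((x-e1)*(x-e2)+(x-e1)*(x-e3)+(x-e2)*(x-e3))^3
            - 108*((x-e1)*(x-e2)*(x-e3))^2 := by ring
        rw [heq]; linarith [h]
    · have ha : 0 ≤ e2 - x := sub_nonneg.mpr hx
      have hac : e2 - x < e3 - x := by linarith
      have hcb : e3 - x < e1 - x := by linarith
      have h := amgm_strict (e2 - x) (e3 - x) (e1 - x) ha hac hcb
      have hc : 0 < e3 - x := lt_of_le_of_lt ha hac
      have hb : 0 < e1 - x := lt_trans hc hcb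
      constructor
      · rw [hq2]
        nlinarith [mul_pos hb hc, mul_nonneg ha hb.le, mul_nonneg ha hc.le]
      · rw [hq2, hr2]
        have heq : 4*((x-e1)*(x-e2)+(x-e1)*(x-e3)+(x-e2)*(x-e3))^3
            - 27*(2*((x-e1)*(x-e2)*(x-e3)))^2
            = 4*((e2-x)*(e1-x)+(e2-x)*(e3-x)+(e1-x)*(e3-x))^3
            - 108*((e2-x)*(e3-x)*(e1-x))^2 := by ring
        rw [heq]; linarith [h]
    
  obtain ⟨hqpos, key⟩ := hmain
  clear hq2 hr2 hg2' hg3' h13q h23q hsum0 he1 he2 he3 hdisc hx hne13 hne23 hne12 h13 h32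
  constructor
  · -- three distinct real roots via IVT for u³ - qu - r
    obtain ⟨s, hsdef⟩ : ∃ s : ℝ, s = Real.sqrt (q/3) := ⟨_, rfl⟩
    have hq3 : (0:ℝ) < q/3 := div_pos hqpos (by norm_num)
    have hs2 : s^2 = q/3 := by rw [hsdef]; exact Real.sq_sqrt hq3.le
    have hspos : 0 < s := by rw [hsdef]; exact Real.sqrt_pos.mpr hq3
    have hApos : 0 < 2*q/3*s := by positivity
    have h1 : (2*q/3*s)^2 = 4*q^3/27 := by
      rw [mul_pow]; rw [hs2]; ring
    have hs3 : s^3 = q/3 * s := by rw [pow_succ, hs2]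
    have hGms : 0 < (-s)^3 - q*(-s) - r := by
      nlinarith [h1, key, hApos, hs3, sq_nonneg (2*q/3*s + r), sq_nonneg (2*q/3*s - r)]
    have hGps : s^3 - q*s - r < 0 := by
      nlinarith [h1, key, hApos, hs3, sq_nonneg (2*q/3*s + r), sq_nonneg (2*q/3*s - r)]
    obtain ⟨B, hBdef⟩ : ∃ B : ℝ, B = 2 + q + |r| + s := ⟨_, rfl⟩
    have habs1 : r ≤ |r| := le_abs_self r
    have habs2 : -r ≤ |r| := neg_le_abs r
    have habs0 : 0 ≤ |r| := abs_nonneg r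
    have hB2 : 2 ≤ B := by rw [hBdef]; linarith
    have hqB : q ≤ B := by rw [hBdef]; linarith
    have hrB : |r| ≤ B := by rw [hBdef]; linarith
    have hsB : s < B := by rw [hBdef]; linarith
    have hBpos : 0 < B := by linarith
    have hqB2 : q*B ≤ B*B := mul_le_mul_of_nonneg_right hqB hBpos.le
    have hcube : 2*(B*B) ≤ B^3 := by nlinarith [hB2, hBpos]
    have hGmB : (-B)^3 - q*(-B) - r < 0 := by
      nlinarith [hqB2, hcube, hB2, hBpos, habs1, habs2, hrB]
    have hGB : 0 < B^3 - q*B - r := by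
      nlinarith [hqB2, hcube, hB2, hBpos, habs1, habs2, hrB]
    have hcont : Continuous (fun u : ℝ => u^3 - q*u - r) := by continuity
    -- root in [-B, -s]
    obtain ⟨u1, hu1mem, hu1⟩ := intermediate_value_Icc (by linarith : -B ≤ -s)
      hcont.continuousOn ⟨hGmB.le, hGms.le⟩
    obtain ⟨u2, hu2mem, hu2⟩ := intermediate_value_Icc' (by linarith : -s ≤ s)
      hcont.continuousOn ⟨hGps.le, hGms.le⟩
    obtain ⟨u3, hu3mem, hu3⟩ := intermediate_value_Icc (by linarith : s ≤ B)
      hcont.continuousOn ⟨hGps.le, hGB.le⟩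
    have hu1' : u1^3 - q*u1 - r = 0 := hu1
    have hu2' : u2^3 - q*u2 - r = 0 := hu2
    have hu3' : u3^3 - q*u3 - r = 0 := hu3
    have hu1lt : u1 < -s := by
      rcases lt_or_eq_of_le hu1mem.2 with h | h
      · exact h
      · exfalso; rw [h] at hu1'; linarith
    have hu2gt : -s < u2 := by
      rcases lt_or_eq_of_le hu2mem.1 with h | h
      · exact h
      · exfalso; rw [← h] at hu2'; linarith [hGms]
    have hu2lt : u2 < s := by
      rcases lt_or_eq_of_le hu2mem.2 with h | h
      · exact h
      · exfalso; rw [h] at hu2'; linarith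
    have hu3gt : s < u3 := by
      rcases lt_or_eq_of_le hu3mem.1 with h | h
      · exact h
      · exfalso; rw [← h] at hu3'; linarith
    rw [hqdef, hrdef] at hu1' hu2' hu3'
    refine ⟨x + u1, x + u2, x + u3, by linarith, by linarith, ?_, ?_, ?_⟩
    · linear_combination hu1'
    · linear_combination hu2'
    · linear_combination hu3'
  · -- φ(x) > 0
    have hphi : 432 * g2 * x ^ 4 + 864 * g3 * x ^ 3 - 72 * g2 ^ 2 * x ^ 2
        - 216 * g2 * g3 * x - g2 ^ 3 - 108 * g3 ^ 2 = 16*(4*q^3 - 27*r^2) := by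
      rw [hqdef, hrdef]; ring
    rw [hphi]; linarith
end

section
/- For every real number g2 > 0, the real quartic polynomial E⁴ − 54·g2·E² − 135·g2² has exactly two (simple) real roots and two non-real roots; in particular, not all of its roots are real. -/
/-- **Remark 3.5.** For every real `g2 > 0`, the quartic
`E⁴ − 54g2E² − 135g2²` has exactly two simple real roots and two non-real roots;
in particular, not all of its roots are real. -/
theorem quartic_two_real_two_nonreal_roots (g2 : ℝ) (hg2 : 0 < g2) :
    ∃ a b : ℝ, a ≠ b ∧
      a ^ 4 - 54 * g2 * a ^ 2 - 135 * g2 ^ 2 = 0 ∧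
      b ^ 4 - 54 * g2 * b ^ 2 - 135 * g2 ^ 2 = 0 ∧
      4 * a ^ 3 - 108 * g2 * a ≠ 0 ∧
      4 * b ^ 3 - 108 * g2 * b ≠ 0 ∧
      (∀ x : ℝ, x ^ 4 - 54 * g2 * x ^ 2 - 135 * g2 ^ 2 = 0 → x = a ∨ x = b) ∧
      ∃ z w : ℂ, z ≠ w ∧ z.im ≠ 0 ∧ w.im ≠ 0 ∧
        z ^ 4 - 54 * (g2 : ℂ) * z ^ 2 - 135 * (g2 : ℂ) ^ 2 = 0 ∧
        w ^ 4 - 54 * (g2 : ℂ) * w ^ 2 - 135 * (g2 : ℂ) ^ 2 = 0 := by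
  set r : ℝ := Real.sqrt 6 with hr
  have hr2 : r ^ 2 = 6 := Real.sq_sqrt (by norm_num)
  have hrpos : 0 < r := Real.sqrt_pos.mpr (by norm_num)
  have hrlt : 27 < 12 * r := by nlinarith
  -- real roots
  have hcpos : 0 < (27 + 12 * r) * g2 := by positivity
  set a : ℝ := Real.sqrt ((27 + 12 * r) * g2) with ha
  have ha2 : a ^ 2 = (27 + 12 * r) * g2 := Real.sq_sqrt hcpos.le
  have hapos : 0 < a := Real.sqrt_pos.mpr hcpos
  have haroot : a ^ 4 - 54 * g2 * a ^ 2 - 135 * g2 ^ 2 = 0 := by nlinarith [ha2, hr2]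
  have hader : 4 * a ^ 3 - 108 * g2 * a ≠ 0 := by
    have : 4 * a ^ 3 - 108 * g2 * a = 4 * a * (12 * r * g2) := by nlinarith [ha2]
    rw [this]; positivity
  refine ⟨a, -a, by intro h; nlinarith, haroot, by nlinarith [haroot],
    hader, by intro h; apply hader; nlinarith [h], ?_, ?_⟩
  · intro x hx
    have hfac : (x ^ 2 - (27 + 12 * r) * g2) * (x ^ 2 - (27 - 12 * r) * g2) = 0 := by
      nlinarith [hr2, hx]
    have h2 : x ^ 2 - (27 - 12 * r) * g2 > 0 := by nlinarith [sq_nonneg x]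
    have h1 : x ^ 2 = a ^ 2 := by rw [ha2]; nlinarith [hfac, h2]
    have : (x - a) * (x + a) = 0 := by nlinarith [h1]
    rcases mul_eq_zero.mp this with h | h
    · left; linarith
    · right; linarith
  · have hdpos : 0 < (12 * r - 27) * g2 := by nlinarith
    set s : ℝ := Real.sqrt ((12 * r - 27) * g2) with hs
    have hs2 : s ^ 2 = (12 * r - 27) * g2 := Real.sq_sqrt hdpos.le
    have hspos : 0 < s := Real.sqrt_pos.mpr hdpos
    have hsC : (s : ℂ) ^ 2 = (12 * (r : ℂ) - 27) * (g2 : ℂ) := by exact_mod_cast hs2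
    have hrC : (r : ℂ) ^ 2 = 6 := by exact_mod_cast hr2
    have hzroot : ((s : ℂ) * Complex.I) ^ 4 - 54 * (g2 : ℂ) * ((s : ℂ) * Complex.I) ^ 2
        - 135 * (g2 : ℂ) ^ 2 = 0 := by
      have h2 : ((s : ℂ) * Complex.I) ^ 2 = -((12 * (r : ℂ) - 27) * (g2 : ℂ)) := by
        rw [mul_pow, Complex.I_sq, hsC]; ring
      calc ((s : ℂ) * Complex.I) ^ 4 - 54 * (g2 : ℂ) * ((s : ℂ) * Complex.I) ^ 2
            - 135 * (g2 : ℂ) ^ 2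
          = (((s : ℂ) * Complex.I) ^ 2) ^ 2 - 54 * (g2 : ℂ) * ((s : ℂ) * Complex.I) ^ 2
            - 135 * (g2 : ℂ) ^ 2 := by ring
        _ = 0 := by rw [h2]; linear_combination (144 * (g2 : ℂ) ^ 2) * hrC
    refine ⟨(s : ℂ) * Complex.I, -((s : ℂ) * Complex.I), ?_, by simp [hspos.ne'],
      by simp [hspos.ne'], hzroot, by linear_combination hzroot⟩
    intro h
    have hz0 : (s : ℂ) * Complex.I = 0 := by
      have h2 : (2 : ℂ) * ((s : ℂ) * Complex.I) = 0 := by linear_combination h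
      simpa using h2
    simp [Complex.I_ne_zero, hspos.ne'] at hz0
end
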